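/- arXiv:2103.12113 — 8 statements merged into one kernel-verified Lean document; each statement's English description precedes it below -/
import Mathlib

section
/- Let t, α, β be positive real numbers with t^β > 2t^α, and let v ∈ ℝ^{n+1} satisfy r(v) = t^{α−1−β} and h(v) = t^α. Then every point x ∈ ℝ^{n+1} with r(x) < t and t^{−β} ≤ h(x) ≤ t^{−α} − t^{−β} satisfies 0 < |⟨v, x⟩| < 1, where ⟨·,·⟩ is the standard inner product on ℝ^{n+1}; in particular, no such x is an integer point. -/
/-
Split `v` and `x` into their components along `ℓ` and in `ℓ^⊥`: the norms of these
components are `h` and `r`. Since `ℓ` is a line, the two `ℓ`-components are parallel, so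
`|⟨v, x⟩|` differs from `h(v) h(x)` by at most `r(v) r(x)` (Cauchy–Schwarz on the `ℓ^⊥`-parts).
The hypotheses put `h(v) h(x)` in `[t^{α-β}, 1 - t^{α-β}]` and `r(v) r(x) < t^{α-β}`, so
`0 < |⟨v, x⟩| < 1`; for integer points `⟨v, x⟩` is an integer, which is impossible.
-/

open scoped RealInnerProductSpace

/-- The vector `(1, θ₁, …, θₙ) ∈ ℝ^{n+1}`. -/
noncomputable def thetaVec (n : ℕ) (θ : Fin n → ℝ) : EuclideanSpace ℝ (Fin (n+1)) :=
  (EuclideanSpace.equiv (Fin (n+1)) ℝ).symm (Fin.cons 1 θ)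

/-- The line `ℓ` spanned by `(1, θ₁, …, θₙ)`. -/
noncomputable def lineTheta (n : ℕ) (θ : Fin n → ℝ) :
    Submodule ℝ (EuclideanSpace ℝ (Fin (n+1))) :=
  Submodule.span ℝ {thetaVec n θ}

/-- `r(x)`: the Euclidean distance from `x` to the line `ℓ`. -/
noncomputable def rdist (n : ℕ) (θ : Fin n → ℝ) (x : EuclideanSpace ℝ (Fin (n+1))) : ℝ :=
  Metric.infDist x (lineTheta n θ : Set (EuclideanSpace ℝ (Fin (n+1))))

/-- `h(x)`: the Euclidean distance from `x` to `ℓ^⊥`. -/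
noncomputable def hdist (n : ℕ) (θ : Fin n → ℝ) (x : EuclideanSpace ℝ (Fin (n+1))) : ℝ :=
  Metric.infDist x ((lineTheta n θ)ᗮ : Set (EuclideanSpace ℝ (Fin (n+1))))

/-- `x ∈ ℤ^{n+1}`: all coordinates of `x` are integers. -/
def IsIntegerPoint (n : ℕ) (x : EuclideanSpace ℝ (Fin (n+1))) : Prop :=
  ∀ i, ∃ m : ℤ, x i = (m : ℝ)

namespace Submodule

variable {E : Type*} [NormedAddCommGroup E] [InnerProductSpace ℝ E]

theorem infDist_eq_norm_sub_starProjection (K : Submodule ℝ E) [K.HasOrthogonalProjection]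
    (x : E) : Metric.infDist x K = ‖x - K.starProjection x‖ := by
  rw [starProjection_minimal, Metric.infDist_eq_iInf]
  simp [dist_eq_norm]

theorem infDist_orthogonal_eq_norm_starProjection (K : Submodule ℝ E)
    [K.HasOrthogonalProjection] (x : E) : Metric.infDist x Kᗮ = ‖K.starProjection x‖ := by
  rw [infDist_eq_norm_sub_starProjection, starProjection_orthogonal]
  simp

theorem inner_eq_inner_starProjection_add_inner_sub_starProjection (K : Submodule ℝ E)
    [K.HasOrthogonalProjection] (v x : E) :
    ⟪v, x⟫ = ⟪K.starProjection v, K.starProjection x⟫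
      + ⟪v - K.starProjection v, x - K.starProjection x⟫ := by
  have hv : ⟪K.starProjection v, x - K.starProjection x⟫ = 0 :=
    inner_right_of_mem_orthogonal (K.starProjection_apply_mem v)
      (K.sub_starProjection_mem_orthogonal x)
  have hx : ⟪v - K.starProjection v, K.starProjection x⟫ = 0 :=
    inner_left_of_mem_orthogonal (K.starProjection_apply_mem x)
      (K.sub_starProjection_mem_orthogonal v)
  conv_lhs =>
    rw [← sub_add_cancel v (K.starProjection v), ← sub_add_cancel x (K.starProjection x)]
  simp only [inner_add_left, inner_add_right, hv, hx]
  ring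

theorem abs_real_inner_of_mem_span_singleton {u a b : E} (ha : a ∈ ℝ ∙ u)
    (hb : b ∈ ℝ ∙ u) : |⟪a, b⟫| = ‖a‖ * ‖b‖ := by
  obtain ⟨c, rfl⟩ := mem_span_singleton.1 ha
  obtain ⟨d, rfl⟩ := mem_span_singleton.1 hb
  simp only [real_inner_smul_left, real_inner_smul_right, real_inner_self_eq_norm_sq,
    norm_smul, abs_mul, Real.norm_eq_abs, abs_pow, abs_norm]
  ring

theorem abs_abs_real_inner_sub_infDist_mul_le (u v x : E) :
    |(|⟪v, x⟫| - Metric.infDist v (ℝ ∙ u)ᗮ * Metric.infDist x (ℝ ∙ u)ᗮ)|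
      ≤ Metric.infDist v (ℝ ∙ u) * Metric.infDist x (ℝ ∙ u) := by
  set K := ℝ ∙ u
  rw [infDist_orthogonal_eq_norm_starProjection, infDist_orthogonal_eq_norm_starProjection,
    infDist_eq_norm_sub_starProjection, infDist_eq_norm_sub_starProjection,
    ← abs_real_inner_of_mem_span_singleton (K.starProjection_apply_mem v)
      (K.starProjection_apply_mem x),
    K.inner_eq_inner_starProjection_add_inner_sub_starProjection v x]
  calc _ ≤ |⟪v - K.starProjection v, x - K.starProjection x⟫| := by
        simpa only [add_sub_cancel_left] using
          abs_abs_sub_abs_le_abs_sub (⟪K.starProjection v, K.starProjection x⟫ + _)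
            ⟪K.starProjection v, K.starProjection x⟫
    _ ≤ _ := abs_real_inner_le_norm _ _

end Submodule

theorem IsIntegerPoint.exists_inner_eq_intCast {n : ℕ} {v x : EuclideanSpace ℝ (Fin (n+1))}
    (hv : IsIntegerPoint n v) (hx : IsIntegerPoint n x) : ∃ m : ℤ, ⟪v, x⟫ = m := by
  choose a ha using hv
  choose b hb using hx
  refine ⟨∑ i, a i * b i, ?_⟩
  simp [PiLp.inner_apply, ha, hb, mul_comm]

theorem stmt0_general (n : ℕ) (θ : Fin n → ℝ) (t α β : ℝ)
    (ht : 0 < t)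
    (v : EuclideanSpace ℝ (Fin (n+1)))
    (hrv : rdist n θ v = t ^ (α - 1 - β))
    (hhv : hdist n θ v = t ^ α)
    (x : EuclideanSpace ℝ (Fin (n+1)))
    (hrx : rdist n θ x < t)
    (hhx₁ : t ^ (-β) ≤ hdist n θ x)
    (hhx₂ : hdist n θ x ≤ t ^ (-α) - t ^ (-β)) :
    0 < |⟪v, x⟫| ∧ |⟪v, x⟫| < 1 ∧ (IsIntegerPoint n v → ¬ IsIntegerPoint n x) := by
  have happrox : |(|⟪v, x⟫| - hdist n θ v * hdist n θ x)| ≤ rdist n θ v * rdist n θ x :=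
    Submodule.abs_abs_real_inner_sub_infDist_mul_le (thetaVec n θ) v x
  have herror : rdist n θ v * rdist n θ x < t ^ (α - β) := by
    calc rdist n θ v * rdist n θ x < t ^ (α - 1 - β) * t := by
          rw [hrv]; gcongr
      _ = t ^ (α - β) := by rw [← Real.rpow_add_one ht.ne']; ring_nf
  have hprod_lower : t ^ (α - β) ≤ hdist n θ v * hdist n θ x := by
    calc t ^ (α - β) = t ^ α * t ^ (-β) := by rw [← Real.rpow_add ht]; ring_nf
      _ ≤ _ := by rw [hhv]; gcongr
  have hprod_upper : hdist n θ v * hdist n θ x ≤ 1 - t ^ (α - β) := by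
    calc hdist n θ v * hdist n θ x ≤ t ^ α * (t ^ (-α) - t ^ (-β)) := by rw [hhv]; gcongr
      _ = 1 - t ^ (α - β) := by
        rw [mul_sub, ← Real.rpow_add ht, ← Real.rpow_add ht, add_neg_cancel, Real.rpow_zero,
          ← sub_eq_add_neg]
  obtain ⟨happrox_lower, happrox_upper⟩ := abs_sub_le_iff.1 happrox
  have hpos : 0 < |⟪v, x⟫| := by linarith
  have hlt : |⟪v, x⟫| < 1 := by linarith
  refine ⟨hpos, hlt, fun hvZ hxZ => ?_⟩
  obtain ⟨m, hm⟩ := hvZ.exists_inner_eq_intCast hxZ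
  rw [hm, ← Int.cast_abs] at hpos hlt
  have : 0 < |m| := by exact_mod_cast hpos
  have : |m| < 1 := by exact_mod_cast hlt
  omega

/-- if `t^β > 2t^α`, `r(v) = t^{α-1-β}`, `h(v) = t^α`, then every `x` with
`r(x) < t` and `t^{-β} ≤ h(x) ≤ t^{-α} - t^{-β}` satisfies `0 < |⟨v, x⟩| < 1`; in particular
(when `v` is an integer point) no such `x` is an integer point. -/
theorem stmt0 (n : ℕ) (hn : 2 ≤ n) (θ : Fin n → ℝ) (t α β : ℝ)
    (ht : 0 < t) (hα : 0 < α) (hβ : 0 < β)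
    (htβα : 2 * t ^ α < t ^ β)
    (v : EuclideanSpace ℝ (Fin (n+1)))
    (hrv : rdist n θ v = t ^ (α - 1 - β))
    (hhv : hdist n θ v = t ^ α)
    (x : EuclideanSpace ℝ (Fin (n+1)))
    (hrx : rdist n θ x < t)
    (hhx₁ : t ^ (-β) ≤ hdist n θ x)
    (hhx₂ : hdist n θ x ≤ t ^ (-α) - t ^ (-β)) :
    0 < |⟪v, x⟫| ∧ |⟪v, x⟫| < 1 ∧ (IsIntegerPoint n v → ¬ IsIntegerPoint n x) :=
  stmt0_general n θ t α β ht v hrv hhv x hrx hhx₁ hhx₂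
end

section
/- (Schmidt–Summerer inequality, linear-form version.) Suppose 1, θ₁, …, θₙ are linearly independent over ℚ and ω < ∞ (which forces λ < ∞). Then ω̂ ≤ (1 + ω)/(1 + λ). -/
open scoped ENNReal


/-- Solvability of the simultaneous approximation system
`max_{1≤i≤n} |x₀θᵢ - xᵢ| ≤ t^{-γ}`, `0 < |x₀| ≤ t` in integers. -/
def SimSolvable (n : ℕ) (θ : Fin n → ℝ) (γ t : ℝ) : Prop :=
  ∃ x : Fin (n+1) → ℤ, x 0 ≠ 0 ∧ (|x 0| : ℝ) ≤ t ∧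
    ∀ i : Fin n, |(x 0 : ℝ) * θ i - (x i.succ : ℝ)| ≤ t ^ (-γ)

/-- Solvability of the linear form system
`|x₀ + θ₁x₁ + … + θₙxₙ| ≤ t^{-γ}`, `0 < max_{1≤i≤n} |xᵢ| ≤ t` in integers. -/
def LinSolvable (n : ℕ) (θ : Fin n → ℝ) (γ t : ℝ) : Prop :=
  ∃ x : Fin (n+1) → ℤ, (∃ i : Fin n, x i.succ ≠ 0) ∧ (∀ i : Fin n, (|x i.succ| : ℝ) ≤ t) ∧
    |(x 0 : ℝ) + ∑ i : Fin n, θ i * (x i.succ : ℝ)| ≤ t ^ (-γ)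

/-- The regular simultaneous Diophantine exponent `λ(θ) ∈ [0,∞]`. -/
noncomputable def lambdaExp (n : ℕ) (θ : Fin n → ℝ) : ℝ≥0∞ :=
  sSup {e : ℝ≥0∞ | ∃ γ : ℝ, 0 < γ ∧ e = ENNReal.ofReal γ ∧
    ∀ T : ℝ, ∃ t : ℝ, T < t ∧ SimSolvable n θ γ t}

/-- The uniform simultaneous Diophantine exponent `λ̂(θ) ∈ [0,∞]`. -/
noncomputable def lambdaHatExp (n : ℕ) (θ : Fin n → ℝ) : ℝ≥0∞ :=
  sSup {e : ℝ≥0∞ | ∃ γ : ℝ, 0 < γ ∧ e = ENNReal.ofReal γ ∧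
    ∃ T : ℝ, ∀ t : ℝ, T < t → SimSolvable n θ γ t}

/-- The regular linear form Diophantine exponent `ω(θ) ∈ [0,∞]`. -/
noncomputable def omegaExp (n : ℕ) (θ : Fin n → ℝ) : ℝ≥0∞ :=
  sSup {e : ℝ≥0∞ | ∃ γ : ℝ, 0 < γ ∧ e = ENNReal.ofReal γ ∧
    ∀ T : ℝ, ∃ t : ℝ, T < t ∧ LinSolvable n θ γ t}

/-- The uniform linear form Diophantine exponent `ω̂(θ) ∈ [0,∞]`. -/
noncomputable def omegaHatExp (n : ℕ) (θ : Fin n → ℝ) : ℝ≥0∞ :=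
  sSup {e : ℝ≥0∞ | ∃ γ : ℝ, 0 < γ ∧ e = ENNReal.ofReal γ ∧
    ∃ T : ℝ, ∀ t : ℝ, T < t → LinSolvable n θ γ t}
section Helpers

variable {n : ℕ} {θ : Fin n → ℝ}

/-- Antitonicity of `x ^ (-d)` in the base. -/
lemma rpow_neg_anti {x y d : ℝ} (hx : 0 < x) (hxy : x ≤ y) (hd : 0 < d) :
    y ^ (-d) ≤ x ^ (-d) := by
  rw [Real.rpow_neg hx.le, Real.rpow_neg (by linarith)]
  exact inv_anti₀ (Real.rpow_pos_of_pos hx d) (Real.rpow_le_rpow hx.le hxy hd.le)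

lemma rpow_neg_anti_strict {x y d : ℝ} (hx : 0 < x) (hxy : x < y) (hd : 0 < d) :
    y ^ (-d) < x ^ (-d) := by
  rw [Real.rpow_neg hx.le, Real.rpow_neg (by linarith)]
  exact inv_strictAnti₀ (Real.rpow_pos_of_pos hx d) (Real.rpow_lt_rpow hx.le hxy hd)

/-- The round function gives the nearest integer. -/
lemma round_nearest (z : ℝ) (m : ℤ) : |z - round z| ≤ |z - m| := by
  rcases eq_or_ne m (round z) with h | h
  · rw [h]
  · have h1 : (1:ℝ) ≤ |(round z : ℝ) - (m:ℝ)| := by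
      have : round z - m ≠ 0 := sub_ne_zero.mpr (Ne.symm h)
      have : 1 ≤ |round z - m| := Int.one_le_abs this
      calc (1:ℝ) ≤ ((|round z - m| : ℤ) : ℝ) := by exact_mod_cast this
        _ = |(round z : ℝ) - (m:ℝ)| := by push_cast; ring
    have h2 : |z - round z| ≤ 1/2 := abs_sub_round z
    have h3 : |(round z : ℝ) - m| ≤ |z - round z| + |z - m| := by
      have := abs_sub_abs_le_abs_sub ((round z : ℝ) - m) 0
      calc |(round z:ℝ) - m| = |(z - m) - (z - round z)| := by ring_nf
        _ ≤ |z - m| + |z - round z| := abs_sub _ _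
        _ = |z - round z| + |z - m| := by ring
    linarith

/-- Linear independence: the linear form does not vanish at nonzero integer points. -/
lemma lf_ne_zero (hindep : LinearIndependent ℚ (Fin.cons 1 θ : Fin (n+1) → ℝ))
    (x : Fin (n+1) → ℤ) (hx : (x 0 : ℝ) + ∑ i : Fin n, θ i * (x i.succ : ℝ) = 0) :
    x = 0 := by
  have h := Fintype.linearIndependent_iff.mp hindep (fun j => (x j : ℚ)) ?_
  · funext j
    have := h j
    exact_mod_cast this
  · have : ∀ j : Fin (n+1), ((x j : ℚ)) • (Fin.cons 1 θ : Fin (n+1) → ℝ) j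
        = ((x j : ℝ)) * (Fin.cons 1 θ : Fin (n+1) → ℝ) j := by
      intro j; rw [Rat.smul_def]; push_cast; ring
    simp only [this]
    rw [Fin.sum_univ_succ]
    simp only [Fin.cons_zero, Fin.cons_succ, mul_one]
    rw [← hx]
    congr 1
    exact Finset.sum_congr rfl fun i _ => by ring

/-- Existence of simultaneous approximation witnesses of arbitrarily large height,
measured against their own height. -/
lemma exists_big_witness (hn : 2 ≤ n)
    (hindep : LinearIndependent ℚ (Fin.cons 1 θ : Fin (n+1) → ℝ))
    {δ : ℝ} (hδ : 0 < δ)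
    (hsol : ∀ T : ℝ, ∃ t : ℝ, T < t ∧ SimSolvable n θ δ t) (U : ℝ) :
    ∃ y : Fin (n+1) → ℤ, y 0 ≠ 0 ∧ U < |(y 0 : ℝ)| ∧
      ∀ i : Fin n, |(y 0 : ℝ) * θ i - (y i.succ : ℝ)| ≤ |(y 0 : ℝ)| ^ (-δ) := by
  have hn0 : 0 < n := by omega
  set i₀ : Fin n := ⟨0, hn0⟩
  set U' : ℝ := max U 1 with hU'
  have hU'1 : (1:ℝ) ≤ U' := le_max_right _ _
  set F : Finset ℤ := (Finset.Icc (-⌈U'⌉) ⌈U'⌉).erase 0 with hF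
  have hceil : (1:ℤ) ≤ ⌈U'⌉ := by
    have := Int.le_ceil U'
    exact_mod_cast (by push_cast; linarith : (1:ℝ) ≤ (⌈U'⌉ : ℝ))
  have h1F : (1:ℤ) ∈ F := by
    rw [hF, Finset.mem_erase, Finset.mem_Icc]
    refine ⟨one_ne_zero, by omega, hceil⟩
  set d : ℤ → ℝ := fun k => |(k:ℝ) * θ i₀ - (round ((k:ℝ) * θ i₀) : ℤ)| with hd
  have hdpos : ∀ k ∈ F, 0 < d k := by
    intro k hk
    have hk0 : k ≠ 0 := (Finset.mem_erase.mp hk).1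
    rcases lt_or_eq_of_le (abs_nonneg ((k:ℝ) * θ i₀ - (round ((k:ℝ) * θ i₀) : ℤ))) with h | h
    · exact h
    · exfalso
      have heq : (k:ℝ) * θ i₀ = (round ((k:ℝ) * θ i₀) : ℤ) := by
        have := abs_eq_zero.mp h.symm
        linarith
      set r : ℤ := round ((k:ℝ) * θ i₀)
      set a : Fin (n+1) → ℤ := fun j => if j = 0 then -r else if j = i₀.succ then k else 0 with ha
      have hLa : (a 0 : ℝ) + ∑ i : Fin n, θ i * (a i.succ : ℝ) = 0 := by
        have ha0 : a 0 = -r := by simp [ha]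
        have has : ∀ i : Fin n, a i.succ = if i = i₀ then k else 0 := by
          intro i
          simp only [ha]
          rw [if_neg (Fin.succ_ne_zero i)]
          by_cases hi : i = i₀
          · rw [if_pos (by rw [hi]), if_pos hi]
          · rw [if_neg (fun h => hi (Fin.succ_injective n h)), if_neg hi]
        simp only [ha0, has]
        rw [Finset.sum_congr rfl (fun i _ => by
          rw [show ((if i = i₀ then k else 0 : ℤ) : ℝ) = if i = i₀ then (k:ℝ) else 0 by
            split <;> simp])]
        rw [Finset.sum_congr rfl (fun i _ => (mul_ite _ _ _ _))]
        simp only [mul_zero]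
        rw [Finset.sum_ite_eq' Finset.univ i₀ (fun i => θ i * (k:ℝ))]
        simp only [Finset.mem_univ, if_pos]
        push_cast
        rw [mul_comm (θ i₀) (k:ℝ), heq]
        ring
      have := lf_ne_zero hindep a hLa
      have : a i₀.succ = 0 := by rw [this]; rfl
      rw [ha] at this
      simp only [Fin.succ_ne_zero, if_neg, if_pos] at this
      · exact hk0 (by simpa using this)
  obtain ⟨k₀, hk₀F, hk₀min⟩ := Finset.exists_min_image F d ⟨1, h1F⟩
  set μ : ℝ := d k₀ with hμ
  have hμpos : 0 < μ := hdpos k₀ hk₀F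
  obtain ⟨t, hTt, y, hy0, hyt, hyerr⟩ := hsol (max (μ ^ (-(1/δ))) U')
  have hy0R : (0:ℝ) < |(y 0 : ℝ)| := abs_pos.mpr (Int.cast_ne_zero.mpr hy0)
  have hyabs : |(y 0:ℝ)| ≤ t := hyt
  have hterr : t ^ (-δ) < μ := by
    have h1 : μ ^ (-(1/δ)) < t := lt_of_le_of_lt (le_max_left _ _) hTt
    calc t ^ (-δ) < (μ ^ (-(1/δ))) ^ (-δ) :=
          rpow_neg_anti_strict (Real.rpow_pos_of_pos hμpos _) h1 hδ
      _ = μ ^ ((-(1/δ)) * (-δ)) := (Real.rpow_mul hμpos.le _ _).symm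
      _ = μ ^ (1:ℝ) := by congr 1; field_simp
      _ = μ := Real.rpow_one μ
  have hUy : U' < |(y 0:ℝ)| := by
    by_contra hle
    push_neg at hle
    have hyF : y 0 ∈ F := by
      rw [hF, Finset.mem_erase, Finset.mem_Icc]
      have h5 : |(y 0:ℝ)| ≤ (⌈U'⌉:ℝ) := le_trans hle (Int.le_ceil U')
      have habs : |y 0| ≤ ⌈U'⌉ := by exact_mod_cast h5
      obtain ⟨ha, hb⟩ := abs_le.mp habs
      exact ⟨hy0, ha, hb⟩
    have h2 : μ ≤ d (y 0) := hk₀min _ hyF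
    have h3 : d (y 0) ≤ |(y 0:ℝ) * θ i₀ - (y i₀.succ : ℝ)| := round_nearest _ _
    have h4 := hyerr i₀
    linarith
  refine ⟨y, hy0, lt_of_le_of_lt (le_max_left U 1) hUy, fun i => ?_⟩
  exact le_trans (hyerr i) (rpow_neg_anti hy0R hyabs hδ)

end Helpers

/-- Pairing identity between a linear-form point and a simultaneous point. -/
lemma pairing (θ : Fin n → ℝ) (x y : Fin (n+1) → ℤ) :
    ((∑ j : Fin (n+1), y j * x j : ℤ) : ℝ)
      = (y 0 : ℝ) * ((x 0 : ℝ) + ∑ i : Fin n, θ i * (x i.succ : ℝ))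
        - ∑ i : Fin n, (x i.succ : ℝ) * ((y 0 : ℝ) * θ i - (y i.succ : ℝ)) := by
  push_cast
  rw [Fin.sum_univ_succ]
  have h : ∀ i : Fin n, (x i.succ : ℝ) * ((y 0 : ℝ) * θ i - (y i.succ : ℝ))
      = (y 0 : ℝ) * (θ i * (x i.succ : ℝ)) - (y i.succ : ℝ) * (x i.succ : ℝ) := by
    intro i; ring
  simp_rw [h]
  rw [Finset.sum_sub_distrib, ← Finset.mul_sum]
  ring

set_option maxHeartbeats 1000000 in
/-- Key inequality: `γ(1+δ) ≤ 1+w` from the three Diophantine conditions. -/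
lemma key_ineq (hn : 2 ≤ n)
    (hindep : LinearIndependent ℚ (Fin.cons 1 θ : Fin (n+1) → ℝ))
    {γ δ w : ℝ} (hγ : 0 < γ) (hδ : 0 < δ) (hγw : γ ≤ w)
    {T₁ T₀ : ℝ}
    (hhat : ∀ t : ℝ, T₁ < t → LinSolvable n θ γ t)
    (hlam : ∀ T : ℝ, ∃ t : ℝ, T < t ∧ SimSolvable n θ δ t)
    (hnw : ∀ t : ℝ, T₀ < t → ¬ LinSolvable n θ w t) :
    γ * (1 + δ) ≤ 1 + w := by
  by_contra hcon
  push_neg at hcon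
  have hw : 0 < w := lt_of_lt_of_le hγ hγw
  have hγδ : 1 < γ * δ := by nlinarith
  set C₁ : ℝ := 2 * max T₀ 1 with hC₁def
  have hC₁2 : (2:ℝ) ≤ C₁ := by
    have : (1:ℝ) ≤ max T₀ 1 := le_max_right _ _
    nlinarith
  have hC₁pos : (0:ℝ) < C₁ := by linarith
  have hβ : 0 < δ - 1/γ := by
    have : 1/γ < δ := by rw [div_lt_iff₀ hγ]; nlinarith
    linarith
  have hα : 0 < 1 + δ - (1+w)/γ := by
    have : (1+w)/γ < 1 + δ := by rw [div_lt_iff₀ hγ]; nlinarith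
    linarith
  -- eventual largeness conditions
  have hU : ∀ᶠ u : ℝ in Filter.atTop,
      (T₁ < (3*u) ^ (1/γ)) ∧ ((n:ℝ) * 3 ^ (1/γ) * u ^ (-(δ - 1/γ)) < 2/3) ∧
        ((n:ℝ) * C₁ ^ w * 3 ^ ((1+w)/γ) < u ^ (1 + δ - (1+w)/γ)) := by
    have h1 : Filter.Tendsto (fun u : ℝ => (3*u) ^ (1/γ)) Filter.atTop Filter.atTop :=
      (tendsto_rpow_atTop (by positivity)).comp
        (Filter.tendsto_id.const_mul_atTop (by norm_num : (0:ℝ) < 3))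
    have h2 : Filter.Tendsto (fun u : ℝ => (n:ℝ) * 3 ^ (1/γ) * u ^ (-(δ - 1/γ)))
        Filter.atTop (nhds 0) := by
      have := (tendsto_rpow_neg_atTop hβ).const_mul ((n:ℝ) * 3 ^ (1/γ))
      simpa using this
    have h3 : Filter.Tendsto (fun u : ℝ => u ^ (1 + δ - (1+w)/γ)) Filter.atTop Filter.atTop :=
      tendsto_rpow_atTop hα
    filter_upwards [h1.eventually_gt_atTop T₁, h2.eventually_lt_const (by norm_num : (0:ℝ) < 2/3),
      h3.eventually_gt_atTop ((n:ℝ) * C₁ ^ w * 3 ^ ((1+w)/γ))] with u hu1 hu2 hu3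
    exact ⟨hu1, hu2, hu3⟩
  obtain ⟨U, hUall⟩ := Filter.eventually_atTop.mp hU
  obtain ⟨y, hy0, hyU, hyerr⟩ := exists_big_witness hn hindep hδ hlam (max U 1)
  set u : ℝ := |(y 0 : ℝ)| with hu_def
  clear_value u
  have hu1 : (1:ℝ) < u := lt_of_le_of_lt (le_max_right U 1) hyU
  have hu0 : (0:ℝ) < u := by linarith
  obtain ⟨hc1, hc2, hc3⟩ := hUall u (le_of_lt (lt_of_le_of_lt (le_max_left U 1) hyU))
  set t : ℝ := (3*u) ^ (1/γ) with ht_def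
  clear_value t
  have h3u : (0:ℝ) < 3*u := by linarith
  have htpos : 0 < t := by rw [ht_def]; exact Real.rpow_pos_of_pos h3u _
  -- the uniform linear-form solution at t
  obtain ⟨x, hxnz, hxb, hxL⟩ := hhat t hc1
  set Lx : ℝ := (x 0 : ℝ) + ∑ i : Fin n, θ i * (x i.succ : ℝ) with hLx_def
  clear_value Lx
  have htpow : t ^ (-γ) = (3*u)⁻¹ := by
    rw [ht_def, ← Real.rpow_mul h3u.le, show (1/γ) * (-γ) = (-1:ℝ) by field_simp,
      Real.rpow_neg_one]
  haveI hne : Nonempty (Fin n) := ⟨⟨0, by omega⟩⟩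
  set X : ℝ := Finset.univ.sup' Finset.univ_nonempty (fun i : Fin n => |(x i.succ : ℝ)|)
    with hX_def
  have hXi : ∀ i : Fin n, |(x i.succ : ℝ)| ≤ X := fun i =>
    Finset.le_sup' (fun i : Fin n => |(x i.succ : ℝ)|) (Finset.mem_univ i)
  have hXt : X ≤ t := Finset.sup'_le _ _ (fun i _ => hxb i)
  have hX1 : (1:ℝ) ≤ X := by
    obtain ⟨i, hi⟩ := hxnz
    have h6 : 1 ≤ |x i.succ| := Int.one_le_abs hi
    have h7 : (1:ℝ) ≤ |(x i.succ : ℝ)| := by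
      rw [← Int.cast_abs]; exact_mod_cast h6
    exact le_trans h7 (hXi i)
  have hX0 : (0:ℝ) < X := by linarith
  clear_value X
  have hpair := pairing θ x y
  rw [← hLx_def] at hpair
  set D : ℤ := ∑ j : Fin (n+1), y j * x j with hD_def
  clear_value D
  have hDbound : |(D:ℝ)| < 1 := by
    have h1 : |(D:ℝ)| ≤ u * |Lx|
        + ∑ i : Fin n, |(x i.succ:ℝ)| * |(y 0:ℝ) * θ i - (y i.succ:ℝ)| := by
      rw [hpair]
      calc |(y 0:ℝ) * Lx - ∑ i : Fin n, (x i.succ:ℝ) * ((y 0:ℝ) * θ i - (y i.succ:ℝ))|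
          ≤ |(y 0:ℝ) * Lx| + |∑ i : Fin n, (x i.succ:ℝ) * ((y 0:ℝ) * θ i - (y i.succ:ℝ))| :=
            abs_sub _ _
        _ ≤ u * |Lx| + ∑ i : Fin n, |(x i.succ:ℝ)| * |(y 0:ℝ) * θ i - (y i.succ:ℝ)| := by
            refine add_le_add (le_of_eq ?_) ?_
            · rw [abs_mul, ← hu_def]
            · calc |∑ i : Fin n, (x i.succ:ℝ) * ((y 0:ℝ) * θ i - (y i.succ:ℝ))|
                  ≤ ∑ i : Fin n, |(x i.succ:ℝ) * ((y 0:ℝ) * θ i - (y i.succ:ℝ))| :=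
                    Finset.abs_sum_le_sum_abs _ _
                _ = ∑ i : Fin n, |(x i.succ:ℝ)| * |(y 0:ℝ) * θ i - (y i.succ:ℝ)| := by
                    simp_rw [abs_mul]
    have h2 : u * |Lx| ≤ 1/3 := by
      have h8 := mul_le_mul_of_nonneg_left hxL (le_of_lt hu0)
      rw [htpow] at h8
      calc u * |Lx| ≤ u * (3*u)⁻¹ := h8
        _ = 1/3 := by field_simp
    have h3 : ∑ i : Fin n, |(x i.succ:ℝ)| * |(y 0:ℝ) * θ i - (y i.succ:ℝ)|
        ≤ (n:ℝ) * t * u ^ (-δ) := by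
      calc ∑ i : Fin n, |(x i.succ:ℝ)| * |(y 0:ℝ) * θ i - (y i.succ:ℝ)|
          ≤ ∑ _i : Fin n, t * u ^ (-δ) :=
            Finset.sum_le_sum (fun i _ =>
              mul_le_mul (hxb i) (hyerr i) (abs_nonneg _) htpos.le)
        _ = (n:ℝ) * t * u ^ (-δ) := by
            rw [Finset.sum_const, Finset.card_univ, Fintype.card_fin, nsmul_eq_mul]; ring
    have h4 : (n:ℝ) * t * u ^ (-δ) < 2/3 := by
      have h9 : (n:ℝ) * t * u ^ (-δ) = (n:ℝ) * 3 ^ (1/γ) * u ^ (-(δ - 1/γ)) := by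
        rw [ht_def, Real.mul_rpow (by norm_num) hu0.le,
          show -(δ - 1/γ) = 1/γ + (-δ) by ring, Real.rpow_add hu0]
        ring
      rw [h9]; exact hc2
    linarith
  have hD0 : D = 0 := by
    have h11 : |D| < 1 := by exact_mod_cast hDbound
    rw [abs_lt] at h11
    omega
  -- lower bound on |Lx| from non-solvability at exponent w
  have hXC : X ≤ C₁ * X := by nlinarith
  have ht'T₀ : T₀ < C₁ * X := by
    have hm1 : (1:ℝ) ≤ max T₀ 1 := le_max_right _ _
    have hm2 : T₀ ≤ max T₀ 1 := le_max_left _ _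
    nlinarith
  have hLlb : (C₁*X) ^ (-w) < |Lx| := by
    by_contra hle
    push_neg at hle
    rw [hLx_def] at hle
    exact hnw (C₁*X) ht'T₀ ⟨x, hxnz, fun i => le_trans (hXi i) hXC, hle⟩
  -- upper bound on |Lx| from orthogonality
  have hLub : u * |Lx| ≤ (n:ℝ) * X * u ^ (-δ) := by
    have hiden : (y 0:ℝ) * Lx
        = ∑ i : Fin n, (x i.succ:ℝ) * ((y 0:ℝ) * θ i - (y i.succ:ℝ)) := by
      rw [hD0] at hpair
      push_cast at hpair
      linarith
    calc u * |Lx| = |(y 0:ℝ) * Lx| := by rw [abs_mul, ← hu_def]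
      _ = |∑ i : Fin n, (x i.succ:ℝ) * ((y 0:ℝ) * θ i - (y i.succ:ℝ))| := by rw [hiden]
      _ ≤ ∑ i : Fin n, |(x i.succ:ℝ) * ((y 0:ℝ) * θ i - (y i.succ:ℝ))| :=
          Finset.abs_sum_le_sum_abs _ _
      _ ≤ ∑ _i : Fin n, X * u ^ (-δ) := by
          refine Finset.sum_le_sum (fun i _ => ?_)
          rw [abs_mul]
          exact mul_le_mul (hXi i) (hyerr i) (abs_nonneg _) hX0.le
      _ = (n:ℝ) * X * u ^ (-δ) := by
          rw [Finset.sum_const, Finset.card_univ, Fintype.card_fin, nsmul_eq_mul]; ring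
  -- combine everything
  have hCw : (0:ℝ) < C₁ ^ w := Real.rpow_pos_of_pos hC₁pos w
  have hXw : (0:ℝ) < X ^ w := Real.rpow_pos_of_pos hX0 w
  have step1 : u * (C₁*X) ^ (-w) < (n:ℝ) * X * u ^ (-δ) :=
    lt_of_lt_of_le (mul_lt_mul_of_pos_left hLlb hu0) hLub
  have hCX : (C₁*X) ^ (-w) = (C₁ ^ w * X ^ w)⁻¹ := by
    rw [Real.rpow_neg (by positivity), Real.mul_rpow hC₁pos.le hX0.le]
  have step2 : u < (n:ℝ) * X * u ^ (-δ) * (C₁ ^ w * X ^ w) := by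
    rw [hCX] at step1
    calc u = u * (C₁ ^ w * X ^ w)⁻¹ * (C₁ ^ w * X ^ w) := by field_simp
      _ < (n:ℝ) * X * u ^ (-δ) * (C₁ ^ w * X ^ w) :=
          mul_lt_mul_of_pos_right step1 (by positivity)
  have step3 : u ^ (1+δ) < (n:ℝ) * C₁ ^ w * X ^ (1+w) := by
    have hXpow : X * X ^ w = X ^ (1+w) := by
      rw [Real.rpow_add hX0, Real.rpow_one]
    have hud : u ^ (-δ) * u ^ δ = 1 := by
      rw [← Real.rpow_add hu0]; norm_num
    have hu1d : u * u ^ δ = u ^ (1+δ) := by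
      rw [Real.rpow_add hu0, Real.rpow_one]
    have hud0 : (0:ℝ) < u ^ δ := Real.rpow_pos_of_pos hu0 δ
    have h12 := mul_lt_mul_of_pos_right step2 hud0
    calc u ^ (1+δ) = u * u ^ δ := hu1d.symm
      _ < (n:ℝ) * X * u ^ (-δ) * (C₁ ^ w * X ^ w) * u ^ δ := h12
      _ = (n:ℝ) * C₁ ^ w * (X * X ^ w) * (u ^ (-δ) * u ^ δ) := by ring
      _ = (n:ℝ) * C₁ ^ w * X ^ (1+w) := by rw [hXpow, hud]; ring
  have step4 : X ^ (1+w) ≤ 3 ^ ((1+w)/γ) * u ^ ((1+w)/γ) := by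
    calc X ^ (1+w) ≤ t ^ (1+w) := Real.rpow_le_rpow hX0.le hXt (by linarith)
      _ = (3*u) ^ ((1/γ) * (1+w)) := by rw [ht_def, ← Real.rpow_mul h3u.le]
      _ = (3*u) ^ ((1+w)/γ) := by congr 1; ring
      _ = 3 ^ ((1+w)/γ) * u ^ ((1+w)/γ) := Real.mul_rpow (by norm_num) hu0.le
  have hn0R : (0:ℝ) < (n:ℝ) := by exact_mod_cast (by omega : 0 < n)
  have step5 : u ^ (1+δ) < (n:ℝ) * C₁ ^ w * 3 ^ ((1+w)/γ) * u ^ ((1+w)/γ) := by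
    calc u ^ (1+δ) < (n:ℝ) * C₁ ^ w * X ^ (1+w) := step3
      _ ≤ (n:ℝ) * C₁ ^ w * (3 ^ ((1+w)/γ) * u ^ ((1+w)/γ)) :=
          mul_le_mul_of_nonneg_left step4 (by positivity)
      _ = (n:ℝ) * C₁ ^ w * 3 ^ ((1+w)/γ) * u ^ ((1+w)/γ) := by ring
  have hupow : (0:ℝ) < u ^ ((1+w)/γ) := Real.rpow_pos_of_pos hu0 _
  have hfin : (n:ℝ) * C₁ ^ w * 3 ^ ((1+w)/γ) * u ^ ((1+w)/γ) < u ^ (1+δ) := by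
    have h13 : u ^ (1+δ) = u ^ (1 + δ - (1+w)/γ) * u ^ ((1+w)/γ) := by
      rw [← Real.rpow_add hu0]; congr 1; ring
    rw [h13]
    exact mul_lt_mul_of_pos_right hc3 hupow
  linarith

lemma real_le_of_forall_pos_le_add {a b : ℝ} (h : ∀ ε : ℝ, 0 < ε → a ≤ b + ε) : a ≤ b := by
  by_contra hc
  push_neg at hc
  have := h ((a-b)/2) (by linarith)
  linarith

/-- A simultaneous approximation yields a linear-form approximation of the same quality. -/
lemma lin_of_sim (hn : 2 ≤ n) {γ t : ℝ} (h : SimSolvable n θ γ t) : LinSolvable n θ γ t := by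
  obtain ⟨y, hy0, hyt, hyerr⟩ := h
  have hn0 : 0 < n := by omega
  set i₀ : Fin n := ⟨0, hn0⟩ with hi₀
  set a : Fin (n+1) → ℤ :=
    fun j => if j = 0 then -(y i₀.succ) else if j = i₀.succ then y 0 else 0 with ha
  have has : ∀ i : Fin n, a i.succ = if i = i₀ then y 0 else 0 := by
    intro i
    simp only [ha]
    rw [if_neg (Fin.succ_ne_zero i)]
    by_cases hi : i = i₀
    · rw [if_pos (by rw [hi]), if_pos hi]
    · rw [if_neg (fun h => hi (Fin.succ_injective n h)), if_neg hi]
  have ht0 : (0:ℝ) ≤ t := le_trans (abs_nonneg _) hyt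
  refine ⟨a, ⟨i₀, ?_⟩, ?_, ?_⟩
  · rw [has]
    simpa using hy0
  · intro i
    rw [has]
    by_cases hi : i = i₀
    · rw [if_pos hi]; exact hyt
    · rw [if_neg hi]; simpa using ht0
  · have ha0 : a 0 = -(y i₀.succ) := by simp [ha]
    have hsum : (a 0 : ℝ) + ∑ i : Fin n, θ i * (a i.succ : ℝ)
        = (y 0:ℝ) * θ i₀ - (y i₀.succ : ℝ) := by
      simp only [ha0, has]
      rw [Finset.sum_congr rfl (fun i _ => by
        rw [show ((if i = i₀ then y 0 else 0 : ℤ) : ℝ) = if i = i₀ then ((y 0 : ℤ):ℝ) else 0 by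
          split <;> simp])]
      rw [Finset.sum_congr rfl (fun i _ => (mul_ite _ _ _ _))]
      simp only [mul_zero]
      rw [Finset.sum_ite_eq' Finset.univ i₀ (fun i => θ i * ((y 0 : ℤ):ℝ))]
      simp only [Finset.mem_univ, if_pos]
      push_cast
      ring
    rw [hsum]
    exact hyerr i₀

set_option maxHeartbeats 1000000 in
/-- Schmidt–Summerer inequality, linear-form version: if `1, θ₁, …, θₙ` are
linearly independent over `ℚ` and `ω < ∞` (which forces `λ < ∞`), then
`ω̂ ≤ (1 + ω)/(1 + λ)`. -/
theorem stmt2 (n : ℕ) (hn : 2 ≤ n) (θ : Fin n → ℝ)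
    (hindep : LinearIndependent ℚ (Fin.cons 1 θ : Fin (n+1) → ℝ))
    (hω : omegaExp n θ < ⊤) :
    lambdaExp n θ < ⊤ ∧
      omegaHatExp n θ ≤ (1 + omegaExp n θ) / (1 + lambdaExp n θ) := by
  have hsub1 : lambdaExp n θ ≤ omegaExp n θ := by
    refine sSup_le_sSup ?_
    rintro e ⟨γ, hγ, he, hprop⟩
    exact ⟨γ, hγ, he, fun T => (hprop T).imp (fun t ht => ⟨ht.1, lin_of_sim hn ht.2⟩)⟩
  have hLam : lambdaExp n θ < ⊤ := lt_of_le_of_lt hsub1 hω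
  refine ⟨hLam, ?_⟩
  set Ω := (omegaExp n θ).toReal with hΩdef
  set Λ := (lambdaExp n θ).toReal with hΛdef
  have hΩ0 : 0 ≤ Ω := ENNReal.toReal_nonneg
  have hΛ0 : 0 ≤ Λ := ENNReal.toReal_nonneg
  have hωeq : omegaExp n θ = ENNReal.ofReal Ω := (ENNReal.ofReal_toReal hω.ne).symm
  have hLameq : lambdaExp n θ = ENNReal.ofReal Λ := (ENNReal.ofReal_toReal hLam.ne).symm
  have hRHS : (1 + omegaExp n θ) / (1 + lambdaExp n θ) = ENNReal.ofReal ((1+Ω)/(1+Λ)) := by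
    rw [hωeq, hLameq, ← ENNReal.ofReal_one, ← ENNReal.ofReal_add zero_le_one hΩ0,
      ← ENNReal.ofReal_add zero_le_one hΛ0, ← ENNReal.ofReal_div_of_pos (by linarith)]
  rw [hRHS]
  unfold omegaHatExp
  refine sSup_le ?_
  rintro e ⟨γ, hγ0, he, T₁, hT₁⟩
  rw [he]
  have hmem : ENNReal.ofReal γ ≤ omegaExp n θ :=
    le_sSup ⟨γ, hγ0, rfl, fun T' =>
      ⟨max T₁ T' + 1, lt_of_le_of_lt (le_max_right _ _) (lt_add_one _),
        hT₁ _ (lt_of_le_of_lt (le_max_left _ _) (lt_add_one _))⟩⟩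
  have hγΩ : γ ≤ Ω := by
    calc γ = (ENNReal.ofReal γ).toReal := (ENNReal.toReal_ofReal hγ0.le).symm
      _ ≤ Ω := ENNReal.toReal_mono hω.ne hmem
  have hkey : ∀ δ : ℝ, 0 < δ → (∀ T : ℝ, ∃ t : ℝ, T < t ∧ SimSolvable n θ δ t) →
      γ * (1 + δ) ≤ 1 + Ω := by
    intro δ hδ hlam
    refine real_le_of_forall_pos_le_add (fun ε hε => ?_)
    have hw : omegaExp n θ < ENNReal.ofReal (Ω + ε) := by
      rw [hωeq]
      exact (ENNReal.ofReal_lt_ofReal_iff (by linarith)).mpr (by linarith)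
    have hnot : ¬ (∀ T : ℝ, ∃ t : ℝ, T < t ∧ LinSolvable n θ (Ω + ε) t) := by
      intro hcontra
      have : ENNReal.ofReal (Ω + ε) ≤ omegaExp n θ :=
        le_sSup ⟨Ω + ε, by linarith, rfl, hcontra⟩
      exact absurd this (not_le.mpr hw)
    push_neg at hnot
    obtain ⟨T₀, hT₀⟩ := hnot
    have h15 := key_ineq hn hindep hγ0 hδ (by linarith : γ ≤ Ω + ε) hT₁ hlam hT₀
    linarith
  have hγΛ : γ * (1 + Λ) ≤ 1 + Ω := by
    rcases eq_or_lt_of_le hΛ0 with h0 | hpos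
    · rw [← h0]
      have : γ * (1 + 0) = γ := by ring
      rw [this]
      linarith
    · refine real_le_of_forall_pos_le_add (fun ε hε => ?_)
      set ε₀ : ℝ := min (ε/γ) Λ with hε₀def
      have hε₀pos : 0 < ε₀ := lt_min (by positivity) hpos
      have hlt : ENNReal.ofReal (Λ - ε₀) < lambdaExp n θ := by
        rw [hLameq]
        exact (ENNReal.ofReal_lt_ofReal_iff hpos).mpr (by linarith)
      rw [lambdaExp] at hlt
      obtain ⟨e', he'mem, he'gt⟩ := lt_sSup_iff.mp hlt
      obtain ⟨δ, hδ0, rfl, hδprop⟩ := he'mem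
      have hδge : Λ - ε₀ < δ := (ENNReal.ofReal_lt_ofReal_iff hδ0).mp he'gt
      have h14 := hkey δ hδ0 hδprop
      have hγε : γ * ε₀ ≤ ε := by
        have h16 : ε₀ ≤ ε/γ := min_le_left _ _
        calc γ * ε₀ ≤ γ * (ε/γ) := by nlinarith
          _ = ε := by field_simp
      nlinarith
  exact ENNReal.ofReal_le_ofReal ((le_div_iff₀ (by linarith : (0:ℝ) < 1+Λ)).mpr hγΛ)
end

section
/- (Schmidt–Summerer inequality, simultaneous version.) Suppose 1, θ₁, …, θₙ are linearly independent over ℚ and ω < ∞ (which forces λ < ∞). Then λ̂ ≤ (1 + ω^{−1})/(1 + λ^{−1}). -/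
open scoped ENNReal


open Filter

lemma int_eq_zero_of_abs_lt {N : ℤ} (h : |(N : ℝ)| < 1) : N = 0 := by
  by_contra hN
  have h1 : (1 : ℤ) ≤ |N| := Int.one_le_abs hN
  have h2 : (1 : ℝ) ≤ |(N : ℝ)| := by
    rw [← Int.cast_abs]; exact_mod_cast h1
  linarith

lemma ell_ne_zero {n : ℕ} {θ : Fin n → ℝ}
    (hindep : LinearIndependent ℚ (Fin.cons 1 θ : Fin (n+1) → ℝ))
    {y : Fin (n+1) → ℤ} (hy : y ≠ 0) :
    (y 0 : ℝ) + ∑ i : Fin n, θ i * (y i.succ : ℝ) ≠ 0 := by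
  intro h0
  have hli := Fintype.linearIndependent_iff.mp hindep (fun j => (y j : ℚ))
  have hs : ∑ j : Fin (n+1), ((y j : ℚ)) • (Fin.cons 1 θ : Fin (n+1) → ℝ) j = 0 := by
    rw [Fin.sum_univ_succ]
    simp only [Fin.cons_zero, Fin.cons_succ, Rat.smul_def]
    push_cast
    rw [← h0]
    rw [mul_one]
    congr 1
    exact Finset.sum_congr rfl fun i _ => mul_comm _ _
  have hz := hli hs
  apply hy
  funext j
  have := hz j
  exact_mod_cast this

lemma sim_to_lin {n : ℕ} (hn : 1 ≤ n) {θ : Fin n → ℝ} {γ t : ℝ}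
    (h : SimSolvable n θ γ t) : LinSolvable n θ γ t := by
  haveI : NeZero n := ⟨by omega⟩
  obtain ⟨x, hx0, hxb, hxv⟩ := h
  have ht : (1 : ℝ) ≤ t := by
    have := Int.one_le_abs hx0
    have h2 : (1 : ℝ) ≤ (|x 0| : ℝ) := by exact_mod_cast this
    linarith
  set z : Fin n → ℤ := fun i => if i = 0 then x 0 else 0 with hzdef
  refine ⟨Fin.cons (-(x (0 : Fin n).succ)) z, ⟨0, ?_⟩, fun i => ?_, ?_⟩
  · rw [Fin.cons_succ]; simp [hzdef, hx0]
  · rw [Fin.cons_succ]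
    by_cases hi : i = 0
    · simp only [hzdef, hi, if_pos rfl]; exact hxb
    · simp only [hzdef, if_neg hi]
      simp only [abs_zero, Int.cast_zero]
      linarith
  · simp only [Fin.cons_succ, Fin.cons_zero]
    have hterm : ∀ i : Fin n, θ i * ((z i : ℤ) : ℝ) = if i = 0 then θ 0 * (x 0 : ℝ) else 0 := by
      intro i
      by_cases hi : i = 0 <;> simp [hzdef, hi]
    rw [Finset.sum_congr rfl (fun i _ => hterm i), Finset.sum_ite_eq' Finset.univ (0 : Fin n)]
    simp only [Finset.mem_univ, if_true]
    have h0 := hxv 0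
    calc |((-(x (0 : Fin n).succ) : ℤ) : ℝ) + θ 0 * (x 0 : ℝ)|
        = |(x 0 : ℝ) * θ 0 - ((x (0 : Fin n).succ : ℤ) : ℝ)| := by
          congr 1; push_cast; ring
      _ ≤ t ^ (-γ) := h0

lemma lin_anti {n : ℕ} {θ : Fin n → ℝ} {γ γ' t : ℝ} (hγ : γ' ≤ γ)
    (h : LinSolvable n θ γ t) : LinSolvable n θ γ' t := by
  obtain ⟨y, ⟨i0, hi0⟩, hyb, hyv⟩ := h
  have ht : (1 : ℝ) ≤ t := by
    have := Int.one_le_abs hi0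
    have h2 : (1 : ℝ) ≤ (|y i0.succ| : ℝ) := by exact_mod_cast this
    linarith [hyb i0]
  exact ⟨y, ⟨i0, hi0⟩, hyb, hyv.trans (Real.rpow_le_rpow_of_exponent_le ht (by linarith))⟩

set_option maxHeartbeats 1000000 in
lemma main_construction (n : ℕ) (hn : 2 ≤ n) (θ : Fin n → ℝ)
    (hindep : LinearIndependent ℚ (Fin.cons 1 θ : Fin (n+1) → ℝ))
    {gh w μ : ℝ} (hgh : 0 < gh) (hw : 0 < w) (hμ : 0 < μ)
    (hgw : 1 < gh * w)
    (hcond : μ * ((1 - gh) * w + 1) < gh * w)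
    {T₀ : ℝ} (hu : ∀ t : ℝ, T₀ < t → SimSolvable n θ gh t)
    (hreg : ∀ T : ℝ, ∃ t : ℝ, T < t ∧ LinSolvable n θ w t) :
    ∀ T : ℝ, ∃ s : ℝ, T < s ∧ SimSolvable n θ μ s := by
  have hμwe : μ < w * (gh * (1 + μ) - μ) := by nlinarith
  have he : 0 < gh * (1 + μ) - μ := by nlinarith
  intro T
  have h1 : ∀ᶠ t : ℝ in atTop, (n : ℝ) * 4 ^ gh * t ^ (1 - w * gh) ≤ 4⁻¹ := by
    have h0 : Tendsto (fun t : ℝ => (n : ℝ) * 4 ^ gh * t ^ (1 - w * gh)) atTop (nhds 0) := by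
      have := (tendsto_rpow_neg_atTop (y := w * gh - 1) (by nlinarith)).const_mul
        ((n : ℝ) * 4 ^ gh)
      simpa [show -(w * gh - 1) = 1 - w * gh by ring] using this
    exact h0.eventually_le_const (by norm_num)
  have h2 : ∀ᶠ t : ℝ in atTop, T₀ < 4⁻¹ * t ^ w :=
    ((tendsto_rpow_atTop hw).const_mul_atTop (by norm_num : (0:ℝ) < 4⁻¹)).eventually_gt_atTop T₀
  have h3 : ∀ᶠ t : ℝ in atTop, T < 4 ^ (-(gh / μ)) * t ^ (w * (gh / μ)) := by
    refine ((tendsto_rpow_atTop (by positivity)).const_mul_atTop ?_).eventually_gt_atTop T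
    positivity
  have h4 : ∀ᶠ t : ℝ in atTop,
      (n : ℝ) ^ μ * 4 ^ (gh * (1 + μ)) * t ^ (μ - w * (gh * (1 + μ) - μ)) ≤ 1 := by
    have h0 : Tendsto (fun t : ℝ => (n : ℝ) ^ μ * 4 ^ (gh * (1 + μ)) *
        t ^ (μ - w * (gh * (1 + μ) - μ))) atTop (nhds 0) := by
      have := (tendsto_rpow_neg_atTop (y := w * (gh * (1 + μ) - μ) - μ) (by linarith)).const_mul
        ((n : ℝ) ^ μ * 4 ^ (gh * (1 + μ)))
      simpa [show -(w * (gh * (1 + μ) - μ) - μ) = μ - w * (gh * (1 + μ) - μ) by ring] using this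
    exact h0.eventually_le_const (by norm_num)
  obtain ⟨A, hA⟩ := eventually_atTop.mp ((((h1.and h2).and h3).and h4).and (eventually_ge_atTop 1))
  obtain ⟨t, htA, y, hynz, hyb, hyval⟩ := hreg A
  obtain ⟨⟨⟨⟨c1, c2⟩, c3⟩, c4⟩, ht1⟩ := hA t htA.le
  have ht0 : (0 : ℝ) < t := lt_of_lt_of_le one_pos ht1
  set ε := |(y 0 : ℝ) + ∑ i : Fin n, θ i * (y i.succ : ℝ)| with hεdef
  have hy0 : y ≠ 0 := by
    rintro rfl
    obtain ⟨i, hi⟩ := hynz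
    exact hi rfl
  have hε0 : 0 < ε := abs_pos.mpr (ell_ne_zero hindep hy0)
  have hεt : ε ≤ t ^ (-w) := hyval
  have htw : (0 : ℝ) < t ^ (-w) := Real.rpow_pos_of_pos ht0 _
  have h4ε : (0 : ℝ) < 4 * ε := by linarith
  have h4εtw : 4 * ε ≤ 4 * t ^ (-w) := by linarith
  set t' := (4 * ε)⁻¹ with ht'def
  have ht'pos : 0 < t' := inv_pos.mpr h4ε
  have hlow : 4⁻¹ * t ^ w ≤ t' := by
    have hi1 : (4 * t ^ (-w))⁻¹ ≤ (4 * ε)⁻¹ := inv_anti₀ h4ε h4εtw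
    have hi2 : (4 * t ^ (-w))⁻¹ = 4⁻¹ * t ^ w := by
      rw [mul_inv, Real.rpow_neg ht0.le, inv_inv]
    rw [ht'def, ← hi2]; exact hi1
  have hT₀t' : T₀ < t' := lt_of_lt_of_le c2 hlow
  obtain ⟨x, hx0, hxb, hxv⟩ := hu t' hT₀t'
  set L := (4 * ε) ^ gh with hLdef
  have hLpos : 0 < L := Real.rpow_pos_of_pos h4ε _
  have ht'g : t' ^ (-gh) = L := by
    rw [ht'def, hLdef, Real.rpow_neg (inv_nonneg.mpr h4ε.le), Real.inv_rpow h4ε.le, inv_inv]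
  have hxv' : ∀ i : Fin n, |(x 0 : ℝ) * θ i - (x i.succ : ℝ)| ≤ L := by
    intro i; have := hxv i; rwa [ht'g] at this
  have hLle : L ≤ 4 ^ gh * t ^ (-(w * gh)) := by
    rw [hLdef]
    calc (4 * ε) ^ gh ≤ (4 * t ^ (-w)) ^ gh :=
          Real.rpow_le_rpow h4ε.le h4εtw hgh.le
      _ = 4 ^ gh * (t ^ (-w)) ^ gh := Real.mul_rpow (by norm_num) htw.le
      _ = 4 ^ gh * t ^ (-(w * gh)) := by
          rw [← Real.rpow_mul ht0.le]
          norm_num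
  have hybR : ∀ i : Fin n, |(y i.succ : ℝ)| ≤ t := hyb
  set N : ℤ := x 0 * y 0 + ∑ i : Fin n, x i.succ * y i.succ with hNdef
  have hid : (N : ℝ) = (x 0 : ℝ) * ((y 0 : ℝ) + ∑ i : Fin n, θ i * (y i.succ : ℝ))
      - ∑ i : Fin n, ((x 0 : ℝ) * θ i - (x i.succ : ℝ)) * (y i.succ : ℝ) := by
    rw [hNdef]
    push_cast
    rw [mul_add, Finset.mul_sum, add_sub_assoc, ← Finset.sum_sub_distrib]
    congr 1
    exact Finset.sum_congr rfl fun i _ => by ring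
  have habs_x0 : |(x 0 : ℝ)| ≤ t' := hxb
  have hsum_bound : |∑ i : Fin n, ((x 0 : ℝ) * θ i - (x i.succ : ℝ)) * (y i.succ : ℝ)|
      ≤ (n : ℝ) * L * t := by
    calc |∑ i : Fin n, ((x 0 : ℝ) * θ i - (x i.succ : ℝ)) * (y i.succ : ℝ)|
        ≤ ∑ i : Fin n, |((x 0 : ℝ) * θ i - (x i.succ : ℝ)) * (y i.succ : ℝ)| :=
          Finset.abs_sum_le_sum_abs _ _
      _ ≤ ∑ _i : Fin n, L * t := by
          refine Finset.sum_le_sum fun i _ => ?_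
          rw [abs_mul]
          exact mul_le_mul (hxv' i) (hybR i) (abs_nonneg _) hLpos.le
      _ = (n : ℝ) * L * t := by
          rw [Finset.sum_const, Finset.card_univ, Fintype.card_fin]
          push_cast; ring
  have hnLt : (n : ℝ) * L * t ≤ 4⁻¹ := by
    have hn0 : (0:ℝ) ≤ (n:ℝ) := by positivity
    calc (n : ℝ) * L * t ≤ (n : ℝ) * (4 ^ gh * t ^ (-(w * gh))) * t := by
          nlinarith [mul_le_mul_of_nonneg_left hLle hn0]
      _ = (n : ℝ) * 4 ^ gh * (t ^ (-(w * gh)) * t ^ (1:ℝ)) := by rw [Real.rpow_one]; ring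
      _ = (n : ℝ) * 4 ^ gh * t ^ (1 - w * gh) := by
          rw [← Real.rpow_add ht0, show -(w * gh) + 1 = 1 - w * gh by ring]
      _ ≤ 4⁻¹ := c1
  have ht'ε : t' * ε = 4⁻¹ := by
    rw [ht'def]; field_simp
  have hNabs : |(N : ℝ)| < 1 := by
    rw [hid]
    calc |(x 0 : ℝ) * ((y 0 : ℝ) + ∑ i : Fin n, θ i * (y i.succ : ℝ))
          - ∑ i : Fin n, ((x 0 : ℝ) * θ i - (x i.succ : ℝ)) * (y i.succ : ℝ)|
        ≤ |(x 0 : ℝ) * ((y 0 : ℝ) + ∑ i : Fin n, θ i * (y i.succ : ℝ))|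
          + |∑ i : Fin n, ((x 0 : ℝ) * θ i - (x i.succ : ℝ)) * (y i.succ : ℝ)| := abs_sub _ _
      _ ≤ t' * ε + (n : ℝ) * L * t := by
          refine add_le_add ?_ hsum_bound
          rw [abs_mul, ← hεdef]
          exact mul_le_mul_of_nonneg_right habs_x0 hε0.le |>.trans
            (le_of_eq rfl)
      _ ≤ 4⁻¹ + 4⁻¹ := by rw [ht'ε]; linarith
      _ < 1 := by norm_num
  have hN0 : N = 0 := int_eq_zero_of_abs_lt hNabs
  have hkey : |(x 0 : ℝ)| * ε ≤ (n : ℝ) * L * t := by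
    have hzero : (x 0 : ℝ) * ((y 0 : ℝ) + ∑ i : Fin n, θ i * (y i.succ : ℝ))
        = ∑ i : Fin n, ((x 0 : ℝ) * θ i - (x i.succ : ℝ)) * (y i.succ : ℝ) := by
      have h := hid
      rw [hN0] at h
      push_cast at h
      linarith
    calc |(x 0 : ℝ)| * ε
        = |(x 0 : ℝ) * ((y 0 : ℝ) + ∑ i : Fin n, θ i * (y i.succ : ℝ))| := by
          rw [abs_mul, hεdef]
      _ = |∑ i : Fin n, ((x 0 : ℝ) * θ i - (x i.succ : ℝ)) * (y i.succ : ℝ)| := by rw [hzero]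
      _ ≤ (n : ℝ) * L * t := hsum_bound
  set s := (4 * ε) ^ (-(gh / μ)) with hsdef
  have hspos : 0 < s := Real.rpow_pos_of_pos h4ε _
  have hsT : T < s := by
    have e1 : s = ((4 * ε)⁻¹) ^ (gh / μ) := by
      rw [hsdef, Real.rpow_neg h4ε.le, ← Real.inv_rpow h4ε.le]
    have e2 : (4⁻¹ * t ^ w) ^ (gh / μ) ≤ ((4 * ε)⁻¹) ^ (gh / μ) :=
      Real.rpow_le_rpow (by positivity) hlow (by positivity)
    have e3 : (4⁻¹ * t ^ w) ^ (gh / μ) = 4 ^ (-(gh / μ)) * t ^ (w * (gh / μ)) := by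
      rw [Real.mul_rpow (by norm_num) (Real.rpow_pos_of_pos ht0 w).le,
        Real.inv_rpow (by norm_num), ← Real.rpow_neg (by norm_num),
        ← Real.rpow_mul ht0.le]
    rw [e3] at e2
    rw [e1]
    exact lt_of_lt_of_le c3 e2
  have hsneg : s ^ (-μ) = L := by
    rw [hsdef, hLdef, ← Real.rpow_mul h4ε.le,
      show -(gh / μ) * -μ = gh by field_simp
    ]
  have hsmu : s ^ μ = L⁻¹ := by
    rw [hsdef, hLdef, ← Real.rpow_mul h4ε.le,
      show -(gh / μ) * μ = -gh by field_simp, Real.rpow_neg h4ε.le]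
  have ha : |(x 0 : ℝ)| ≤ (n : ℝ) * t * ε⁻¹ * L := by
    have := (le_div_iff₀ hε0).mpr hkey
    calc |(x 0 : ℝ)| ≤ (n : ℝ) * L * t / ε := this
      _ = (n : ℝ) * t * ε⁻¹ * L := by field_simp
  have hq1 : ((n : ℝ) * t * ε⁻¹ * L) ^ μ = (n:ℝ)^μ * t^μ * (ε⁻¹)^μ * L^μ := by
    rw [Real.mul_rpow (by positivity) hLpos.le, Real.mul_rpow (by positivity) (by positivity),
      Real.mul_rpow (by positivity) ht0.le]
  have hq2 : (ε⁻¹) ^ μ = ε ^ (-μ) := by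
    rw [Real.inv_rpow hε0.le, ← Real.rpow_neg hε0.le]
  have hq3 : L ^ μ * L = 4 ^ (gh * (1 + μ)) * ε ^ (gh * (1 + μ)) := by
    have e1 : L ^ μ * L = (4 * ε) ^ (gh * μ + gh) := by
      rw [hLdef, ← Real.rpow_mul h4ε.le, Real.rpow_add h4ε]
    rw [e1, show gh * μ + gh = gh * (1 + μ) by ring, Real.mul_rpow (by norm_num) hε0.le]
  have hq4 : ε ^ (-μ) * ε ^ (gh * (1 + μ)) = ε ^ (gh * (1 + μ) - μ) := by
    rw [← Real.rpow_add hε0]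
    congr 1
    ring
  have hpow : |(x 0 : ℝ)| ^ μ * L ≤ 1 := by
    calc |(x 0 : ℝ)| ^ μ * L ≤ ((n : ℝ) * t * ε⁻¹ * L) ^ μ * L := by
          exact mul_le_mul_of_nonneg_right
            (Real.rpow_le_rpow (abs_nonneg _) ha hμ.le) hLpos.le
      _ = (n:ℝ)^μ * t^μ * ε^(-μ) * (L^μ * L) := by rw [hq1, hq2]; ring
      _ = (n:ℝ)^μ * t^μ * ε^(-μ) * (4 ^ (gh * (1 + μ)) * ε ^ (gh * (1 + μ))) := by rw [hq3]
      _ = (n:ℝ)^μ * 4 ^ (gh * (1 + μ)) * (t^μ * (ε^(-μ) * ε^(gh * (1 + μ)))) := by ring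
      _ = (n:ℝ)^μ * 4 ^ (gh * (1 + μ)) * (t^μ * ε^(gh * (1 + μ) - μ)) := by rw [hq4]
      _ ≤ (n:ℝ)^μ * 4 ^ (gh * (1 + μ)) * (t^μ * (t ^ (-w))^(gh * (1 + μ) - μ)) := by
          have hb : ε^(gh * (1 + μ) - μ) ≤ (t ^ (-w))^(gh * (1 + μ) - μ) :=
            Real.rpow_le_rpow hε0.le hεt he.le
          have h1' : (0:ℝ) ≤ (n:ℝ)^μ * 4 ^ (gh * (1 + μ)) := by positivity
          have h2' : (0:ℝ) ≤ t^μ := by positivity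
          exact mul_le_mul_of_nonneg_left (mul_le_mul_of_nonneg_left hb h2') h1'
      _ = (n:ℝ)^μ * 4 ^ (gh * (1 + μ)) * t ^ (μ - w * (gh * (1 + μ) - μ)) := by
          rw [← Real.rpow_mul ht0.le, ← Real.rpow_add ht0,
            show μ + -w * (gh * (1 + μ) - μ) = μ - w * (gh * (1 + μ) - μ) by ring]
      _ ≤ 1 := c4
  have haμ : |(x 0 : ℝ)| ^ μ ≤ s ^ μ := by
    rw [hsmu, inv_eq_one_div, le_div_iff₀ hLpos]
    exact hpow
  have hqs : |(x 0 : ℝ)| ≤ s :=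
    (Real.rpow_le_rpow_iff (abs_nonneg _) hspos.le hμ).mp haμ
  refine ⟨s, hsT, x, hx0, hqs, fun i => ?_⟩
  rw [hsneg]
  exact hxv' i

/-- Schmidt–Summerer inequality, simultaneous version: if `1, θ₁, …, θₙ` are
linearly independent over `ℚ` and `ω < ∞` (which forces `λ < ∞`), then
`λ̂ ≤ (1 + ω⁻¹)/(1 + λ⁻¹)`. -/
theorem stmt3 (n : ℕ) (hn : 2 ≤ n) (θ : Fin n → ℝ)
    (hindep : LinearIndependent ℚ (Fin.cons 1 θ : Fin (n+1) → ℝ))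
    (hω : omegaExp n θ < ⊤) :
    lambdaExp n θ < ⊤ ∧
      lambdaHatExp n θ ≤ (1 + (omegaExp n θ)⁻¹) / (1 + (lambdaExp n θ)⁻¹) := by

  have hlwx : lambdaExp n θ ≤ omegaExp n θ := by
    apply sSup_le_sSup
    rintro e ⟨γ, hγ, rfl, hp⟩
    exact ⟨γ, hγ, rfl, fun T => by
      obtain ⟨t, ht, hs⟩ := hp T
      exact ⟨t, ht, sim_to_lin (by omega) hs⟩⟩
  have hΛtop : lambdaExp n θ < ⊤ := lt_of_le_of_lt hlwx hω
  refine ⟨hΛtop, ?_⟩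
  apply sSup_le
  rintro e ⟨gh, hgh, rfl, T₀, hu⟩
  -- the same exponent is in the regular set
  have hregγ : ∀ T : ℝ, ∃ t : ℝ, T < t ∧ SimSolvable n θ gh t := by
    intro T
    refine ⟨max T T₀ + 1, ?_, hu _ ?_⟩
    · have := le_max_left T T₀; linarith
    · have := le_max_right T T₀; linarith
  have hghΛ : ENNReal.ofReal gh ≤ lambdaExp n θ := le_sSup ⟨gh, hgh, rfl, hregγ⟩
  have hΛ0 : 0 < lambdaExp n θ := lt_of_lt_of_le (ENNReal.ofReal_pos.mpr hgh) hghΛ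
  have hΩ0 : 0 < omegaExp n θ := lt_of_lt_of_le hΛ0 hlwx
  set l := (lambdaExp n θ).toReal with hldef
  set o := (omegaExp n θ).toReal with hodef
  have hl : 0 < l := ENNReal.toReal_pos hΛ0.ne' hΛtop.ne
  have ho : 0 < o := ENNReal.toReal_pos hΩ0.ne' hω.ne
  have hlo : l ≤ o := (ENNReal.toReal_le_toReal hΛtop.ne hω.ne).mpr hlwx
  have hΛeq : lambdaExp n θ = ENNReal.ofReal l := (ENNReal.ofReal_toReal hΛtop.ne).symm
  have hΩeq : omegaExp n θ = ENNReal.ofReal o := (ENNReal.ofReal_toReal hω.ne).symm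
  have hγl : gh ≤ l := by
    rw [hΛeq] at hghΛ
    exact (ENNReal.ofReal_le_ofReal_iff hl.le).mp hghΛ
  -- reduce to a real inequality
  rw [hΛeq, hΩeq, ← ENNReal.ofReal_inv_of_pos ho, ← ENNReal.ofReal_inv_of_pos hl,
    ← ENNReal.ofReal_one, ← ENNReal.ofReal_add (by norm_num) (by positivity),
    ← ENNReal.ofReal_add (by norm_num) (by positivity),
    ← ENNReal.ofReal_div_of_pos (by positivity)]
  apply ENNReal.ofReal_le_ofReal
  -- the real inequality gh ≤ (1 + o⁻¹)/(1 + l⁻¹)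
  by_contra hB
  push_neg at hB
  rcases le_or_gt (o * l) 1 with hol | hol
  · -- trivial case: then RHS ≥ l ≥ gh
    have h1l : (0:ℝ) < 1 + l⁻¹ := by positivity
    have hBl : l ≤ (1 + o⁻¹) / (1 + l⁻¹) := by
      rw [le_div_iff₀ h1l]
      have e1 : l * (1 + l⁻¹) = l + 1 := by field_simp
      have e2 : l ≤ o⁻¹ := by
        rw [inv_eq_one_div, le_div_iff₀ ho]
        linarith
      rw [e1]
      linarith
    linarith
  · -- main case
    have h1l : (0:ℝ) < 1 + l⁻¹ := by positivity
    have hBl : l * (o + 1) < gh * o * (l + 1) := by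
      have h2 := (div_lt_iff₀ h1l).mp hB
      have e1 : (1 + o⁻¹) * (o * l) = l * (o + 1) := by field_simp
      have e2 : gh * (1 + l⁻¹) * (o * l) = gh * o * (l + 1) := by field_simp
      have h3 := mul_lt_mul_of_pos_right h2 (by positivity : (0:ℝ) < o * l)
      rw [e1, e2] at h3
      exact h3
    set a := gh * (1 + l) - l with hadef
    have hao : l < a * o := by nlinarith
    have ha : 0 < a := by
      by_contra hc
      push_neg at hc
      have : a * o ≤ 0 := mul_nonpos_of_nonpos_of_nonneg hc ho.le
      linarith
    have hγo : 1 < gh * o := by nlinarith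
    set w := (max (l / a) (1 / gh) + o) / 2 with hwdef
    have hmax_lt : max (l / a) (1 / gh) < o :=
      max_lt ((div_lt_iff₀ ha).mpr (by linarith [hao] : l < o * a))
        ((div_lt_iff₀ hgh).mpr (by linarith [hγo] : 1 < o * gh))
    have hwo : w < o := by rw [hwdef]; linarith
    have hwgt : max (l / a) (1 / gh) < w := by rw [hwdef]; linarith
    have h_la_w : l / a < w := lt_of_le_of_lt (le_max_left _ _) hwgt
    have h_inv_w : 1 / gh < w := lt_of_le_of_lt (le_max_right _ _) hwgt
    have hw0 : 0 < w := lt_trans (by positivity) h_inv_w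
    have hgw : 1 < gh * w := by
      have := (div_lt_iff₀ hgh).mp h_inv_w
      linarith [this]
    have hlaw : l < a * w := by
      have := (div_lt_iff₀ ha).mp h_la_w
      linarith [this]
    -- regular linear-form solvability at exponent w
    have hwΩ : ENNReal.ofReal w < omegaExp n θ := by
      rw [hΩeq]
      exact (ENNReal.ofReal_lt_ofReal_iff ho).mpr hwo
    have hregw : ∀ T : ℝ, ∃ t : ℝ, T < t ∧ LinSolvable n θ w t := by
      rw [omegaExp] at hwΩ
      obtain ⟨e', he'mem, hlt⟩ := lt_sSup_iff.mp hwΩ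
      obtain ⟨w₂, hw₂0, rfl, hpw₂⟩ := he'mem
      have hww₂ : w ≤ w₂ := by
        by_contra hc
        push_neg at hc
        exact absurd hlt (not_lt.mpr (ENNReal.ofReal_le_ofReal hc.le))
      intro T
      obtain ⟨t, ht, hsol⟩ := hpw₂ T
      exact ⟨t, ht, lin_anti hww₂ hsol⟩
    -- choose μ and contradict
    have hcontra : ∀ μ : ℝ, 0 < μ → μ * ((1 - gh) * w + 1) < gh * w → μ ≤ l := by
      intro μ hμ0 hcond
      have hprop := main_construction n hn θ hindep hgh hw0 hμ0 hgw hcond hu hregw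
      have hmem : ENNReal.ofReal μ ≤ lambdaExp n θ := le_sSup ⟨μ, hμ0, rfl, hprop⟩
      rw [hΛeq] at hmem
      exact (ENNReal.ofReal_le_ofReal_iff hl.le).mp hmem
    set D := (1 - gh) * w + 1 with hDdef
    rcases le_or_gt D 0 with hD | hD
    · have := hcontra (l + 1) (by linarith)
        (by
          have : (l + 1) * D ≤ 0 := mul_nonpos_of_nonneg_of_nonpos (by linarith) hD
          nlinarith [mul_pos hgh hw0])
      linarith
    · have hμl : l < gh * w / D := by
        rw [lt_div_iff₀ hD]
        nlinarith
      have := hcontra ((l + gh * w / D) / 2) (by linarith)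
        (by
          have h5 : (l + gh * w / D) / 2 < gh * w / D := by linarith
          calc (l + gh * w / D) / 2 * D < gh * w / D * D := by
                exact mul_lt_mul_of_pos_right h5 hD
            _ = gh * w := by field_simp)
      linarith
end

section
/- Let n ≥ 2 be an integer, let w be a real number with w ≥ n, and let l be a real number with 1/n ≤ l < 1. Define f(x) = w^{−1}xⁿ − x + (1 − w^{−1}), g(x) = (1−l)xⁿ − x^{n−1} + l, A = (1 − w^{−1})/(1 − l), and M = (wl)^{1/(n−1)}. Then A ≥ 1 and M ≥ 1, and the following three conditions are equivalent: (i) g(A) ≥ 0; (ii) A ≤ M; (iii) f(M) ≤ 0. Moreover, the corresponding equalities are equivalent: g(A) = 0 if and only if A = M if and only if f(M) = 0. -/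
/-- for an integer `n ≥ 2`, real `w ≥ n` and real `l` with `1/n ≤ l < 1`, setting
`f(x) = w⁻¹xⁿ - x + (1 - w⁻¹)`, `g(x) = (1-l)xⁿ - x^{n-1} + l`, `A = (1 - w⁻¹)/(1 - l)` and
`M = (wl)^{1/(n-1)}`, one has `A ≥ 1`, `M ≥ 1`, the equivalences
`g(A) ≥ 0 ↔ A ≤ M ↔ f(M) ≤ 0`, and the equivalences of the corresponding equalities
`g(A) = 0 ↔ A = M ↔ f(M) = 0`. -/
theorem stmt7 (n : ℕ) (hn : 2 ≤ n) (w l A M : ℝ)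
    (hw : (n : ℝ) ≤ w) (hl₁ : 1 / (n : ℝ) ≤ l) (hl₂ : l < 1)
    (hA : A = (1 - w⁻¹) / (1 - l))
    (hM : M = (w * l) ^ (((n : ℝ) - 1)⁻¹)) :
    1 ≤ A ∧ 1 ≤ M ∧
      (0 ≤ (1 - l) * A ^ n - A ^ (n - 1) + l ↔ A ≤ M) ∧
      (A ≤ M ↔ w⁻¹ * M ^ n - M + (1 - w⁻¹) ≤ 0) ∧
      ((1 - l) * A ^ n - A ^ (n - 1) + l = 0 ↔ A = M) ∧
      (A = M ↔ w⁻¹ * M ^ n - M + (1 - w⁻¹) = 0) := by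
  have hnR : (2:ℝ) ≤ (n:ℝ) := by exact_mod_cast hn
  have hnpos : (0:ℝ) < n := by linarith
  have hw0 : (0:ℝ) < w := by linarith
  have hwne : w ≠ 0 := ne_of_gt hw0
  have hww : w * w⁻¹ = 1 := mul_inv_cancel₀ hwne
  have hl0 : (0:ℝ) < l := lt_of_lt_of_le (by positivity) hl₁
  have hwl : (1:ℝ) ≤ w * l := by
    calc (1:ℝ) = (n:ℝ) * (1/(n:ℝ)) := by field_simp
    _ ≤ w * l := mul_le_mul hw hl₁ (by positivity) (le_of_lt hw0)
  have hwl0 : (0:ℝ) ≤ w * l := by linarith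
  have h1l : (0:ℝ) < 1 - l := by linarith
  have hinv : w⁻¹ ≤ l := by
    have h1 : w⁻¹ ≤ 1/(n:ℝ) := by
      rw [inv_le_comm₀ hw0 (by positivity)]
      rw [one_div, inv_inv]
      exact hw
    linarith
  have hAw : (1 - l) * A = 1 - w⁻¹ := by
    rw [hA]; field_simp
  have hA1 : 1 ≤ A := by
    rw [hA, le_div_iff₀ h1l]
    linarith
  have hA0 : (0:ℝ) ≤ A := by linarith
  have hMeq : M ^ (n-1) = w * l := by
    rw [hM, ← Real.rpow_natCast ((w*l) ^ (((n:ℝ) - 1)⁻¹)) (n-1), ← Real.rpow_mul hwl0]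
    have hc : ((n-1:ℕ):ℝ) = (n:ℝ) - 1 := by
      have : 1 ≤ n := by omega
      push_cast [this]; ring
    rw [hc, inv_mul_cancel₀ (by linarith : (n:ℝ) - 1 ≠ 0), Real.rpow_one]
  have hM0 : (0:ℝ) ≤ M := by rw [hM]; positivity
  have hne : n - 1 ≠ 0 := by omega
  have hM1 : 1 ≤ M := by
    by_contra h
    push_neg at h
    have : M ^ (n-1) < 1 := pow_lt_one₀ hM0 h hne
    rw [hMeq] at this; linarith
  have hAn : A ^ n = A ^ (n-1) * A := by
    rw [← pow_succ]; congr 1; omega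
  have hg : (1-l)*A^n - A^(n-1) + l = l - w⁻¹ * A^(n-1) := by
    rw [hAn]
    linear_combination (A^(n-1)) * hAw
  have hMn : M ^ n = w * l * M := by
    rw [show n = (n-1)+1 by omega, pow_succ, hMeq]
  have hf : w⁻¹*M^n - M + (1-w⁻¹) = (1-l)*(A-M) := by
    rw [hMn]
    linear_combination (l*M) * (inv_mul_cancel₀ hwne) - hAw
  have hpowle : A ^ (n-1) ≤ M ^ (n-1) ↔ A ≤ M :=
    pow_le_pow_iff_left₀ hA0 hM0 hne
  have hpoweq : A ^ (n-1) = M ^ (n-1) ↔ A = M := by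
    constructor
    · intro h
      exact le_antisymm (hpowle.mp h.le)
        ((pow_le_pow_iff_left₀ hM0 hA0 hne).mp h.ge)
    · intro h; rw [h]
  have hw'0 : (0:ℝ) < w⁻¹ := by positivity
  refine ⟨hA1, hM1, ?_, ?_, ?_, ?_⟩
  · rw [hg, ← hpowle, hMeq]
    constructor
    · intro h; nlinarith [mul_nonneg (le_of_lt hw0) h]
    · intro h; nlinarith [mul_le_mul_of_nonneg_left h (le_of_lt hw'0)]
  · rw [hf]
    constructor
    · intro h; nlinarith
    · intro h; nlinarith
  · rw [hg, ← hpoweq, hMeq]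
    constructor
    · intro h
      have h2 : w⁻¹ * A ^ (n-1) = l := by linarith
      calc A ^ (n-1) = w * (w⁻¹ * A ^ (n-1)) := by
            rw [← mul_assoc, hww, one_mul]
        _ = w * l := by rw [h2]
    · intro h
      rw [h, ← mul_assoc, inv_mul_cancel₀ hwne, one_mul]
      ring
  · rw [hf]
    constructor
    · intro h; rw [h]; ring
    · intro h
      have : A - M = 0 := by
        rcases mul_eq_zero.mp h with h' | h'
        · linarith
        · exact h'
      linarith
end

section
/- Suppose 1, θ₁, …, θₙ are linearly independent over ℚ, ω̂ < ∞, and λ̂ < 1. Then either G_lin(ω̂) ≤ (ω̂λ̂)^{1/(n−1)} ≤ (1 − ω̂^{−1})/(1 − λ̂) ≤ G_sim(λ̂), or G_sim(λ̂) ≤ (1 − ω̂^{−1})/(1 − λ̂) ≤ (ω̂λ̂)^{1/(n−1)} ≤ G_lin(ω̂). -/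
set_option maxHeartbeats 1000000


open scoped ENNReal


/-- `G_lin(w)`: the largest real root of `f(x) = w⁻¹xⁿ - x + (1 - w⁻¹)`
(the root set always contains `1`, so the supremum is the largest root). -/
noncomputable def Glin (n : ℕ) (w : ℝ) : ℝ :=
  sSup {x : ℝ | w⁻¹ * x ^ n - x + (1 - w⁻¹) = 0}

/-- `G_sim(l)`: the largest real root of `g(x) = (1-l)xⁿ - x^{n-1} + l`
(the root set always contains `1`, so the supremum is the largest root). -/
noncomputable def Gsim (n : ℕ) (l : ℝ) : ℝ :=
  sSup {x : ℝ | (1 - l) * x ^ n - x ^ (n - 1) + l = 0}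


section Aux
open Set Real

lemma root_le_of {F F' : ℝ → ℝ} {b : ℝ}
    (hd : ∀ x, HasDerivAt F (F' x) x) (hFb : 0 ≤ F b)
    (hF' : ∀ x, b < x → 0 < F' x) {x : ℝ} (hx : F x = 0) : x ≤ b := by
  by_contra h
  push_neg at h
  have hmono : StrictMonoOn F (Ici b) := by
    apply strictMonoOn_of_deriv_pos (convex_Ici b)
    · exact Continuous.continuousOn (continuous_iff_continuousAt.2
        fun y => (hd y).continuousAt)
    · intro y hy
      rw [interior_Ici] at hy
      rw [(hd y).deriv]
      exact hF' y hy
  have := hmono self_mem_Ici (le_of_lt h : b ≤ x) h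
  rw [hx] at this
  linarith

lemma exists_root_ge' {F : ℝ → ℝ} (hc : Continuous F) {b X : ℝ} (hbX : b ≤ X)
    (h1 : F b ≤ 0) (h2 : 0 ≤ F X) : ∃ x, b ≤ x ∧ F x = 0 := by
  obtain ⟨c, hc1, hc2⟩ := intermediate_value_Icc hbX hc.continuousOn (mem_Icc.2 ⟨h1, h2⟩)
  exact ⟨c, hc1.1, hc2⟩

lemma chain_dichotomy (n : ℕ) (hn : 2 ≤ n) (w l : ℝ)
    (hw : (n : ℝ) ≤ w) (hl : 1/(n:ℝ) ≤ l) (hl1 : l < 1) :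
    (Glin n w ≤ (w * l) ^ (((n : ℝ) - 1)⁻¹) ∧
      (w * l) ^ (((n : ℝ) - 1)⁻¹) ≤ (1 - w⁻¹) / (1 - l) ∧
      (1 - w⁻¹) / (1 - l) ≤ Gsim n l) ∨
    (Gsim n l ≤ (1 - w⁻¹) / (1 - l) ∧
      (1 - w⁻¹) / (1 - l) ≤ (w * l) ^ (((n : ℝ) - 1)⁻¹) ∧
      (w * l) ^ (((n : ℝ) - 1)⁻¹) ≤ Glin n w) := by
  have hnR : (2:ℝ) ≤ (n:ℝ) := by exact_mod_cast hn
  have hn1 : (1:ℝ) ≤ (n:ℝ) - 1 := by linarith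
  have hw2 : (2:ℝ) ≤ w := le_trans hnR hw
  have hw0 : 0 < w := by linarith
  have hl0 : 0 < l := lt_of_lt_of_le (by positivity) hl
  have hwl1 : 1 ≤ w * l := by
    calc (1:ℝ) = (n:ℝ) * (1/(n:ℝ)) := by field_simp
    _ ≤ w * l := mul_le_mul hw hl (by positivity) (by linarith)
  set B := (w * l) ^ (((n : ℝ) - 1)⁻¹) with hB
  set C := (1 - w⁻¹) / (1 - l) with hC
  have h1l : 0 < 1 - l := by linarith
  have hwinv : w⁻¹ < 1 := by rw [inv_lt_one_iff₀]; right; linarith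
  have h1w : 0 < 1 - w⁻¹ := by linarith
  have hC0 : 0 < C := div_pos h1w h1l
  have hB1 : (1:ℝ) ≤ B := Real.one_le_rpow hwl1 (by positivity)
  have hBpow : B ^ (n - 1) = w * l := by
    rw [hB, ← Real.rpow_natCast ((w*l) ^ (((n : ℝ) - 1)⁻¹)) (n-1),
      ← Real.rpow_mul (by positivity)]
    have e : ((n - 1 : ℕ) : ℝ) = (n:ℝ) - 1 := by
      have h1n : 1 ≤ n := by omega
      push_cast [Nat.cast_sub h1n]; ring
    rw [e, inv_mul_cancel₀ (by linarith), Real.rpow_one]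
  have hClin : (1 - l) * C = 1 - w⁻¹ := by
    rw [hC]; field_simp
  -- derivatives
  have hdf : ∀ x : ℝ, HasDerivAt (fun x : ℝ => w⁻¹ * x ^ n - x + (1 - w⁻¹))
      (w⁻¹ * ((n:ℝ) * x ^ (n-1)) - 1) x := by
    intro x
    have h1 : HasDerivAt (fun x : ℝ => x ^ n) ((n:ℝ) * x ^ (n-1)) x := hasDerivAt_pow n x
    simpa using ((h1.const_mul w⁻¹).sub (hasDerivAt_id x)).add_const (1 - w⁻¹)
  have hdg : ∀ x : ℝ, HasDerivAt (fun x : ℝ => (1 - l) * x ^ n - x ^ (n-1) + l)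
      ((1 - l) * ((n:ℝ) * x ^ (n-1)) - ((n:ℝ) - 1) * x ^ (n-2)) x := by
    intro x
    have h1 : HasDerivAt (fun x : ℝ => x ^ n) ((n:ℝ) * x ^ (n-1)) x := hasDerivAt_pow n x
    have h2 : HasDerivAt (fun x : ℝ => x ^ (n-1)) (((n-1 : ℕ):ℝ) * x ^ (n-1-1)) x :=
      hasDerivAt_pow (n-1) x
    have h3 := ((h1.const_mul (1 - l)).sub h2).add_const l
    have e1 : ((n-1 : ℕ):ℝ) = (n:ℝ) - 1 := by
      have h1n : 1 ≤ n := by omega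
      push_cast [Nat.cast_sub h1n]; ring
    have e2 : n - 1 - 1 = n - 2 := by omega
    rw [e1, e2] at h3
    exact h3
  -- values
  have hfB : w⁻¹ * B ^ n - B + (1 - w⁻¹) = (1 - w⁻¹) - B * (1 - l) := by
    have hBn : B ^ n = B * (w * l) := by
      rw [← hBpow, ← pow_succ']
      congr 1
      omega
    rw [hBn]
    field_simp
    ring
  have hgC : (1 - l) * C ^ n - C ^ (n-1) + l = l - C ^ (n-1) * w⁻¹ := by
    have hCn : C ^ n = C ^ (n-1) * C := by
      rw [← pow_succ]; congr 1; omega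
    calc (1 - l) * C ^ n - C ^ (n-1) + l
        = C ^ (n-1) * ((1 - l) * C) - C ^ (n-1) + l := by rw [hCn]; ring
      _ = C ^ (n-1) * (1 - w⁻¹) - C ^ (n-1) + l := by rw [hClin]
      _ = l - C ^ (n-1) * w⁻¹ := by ring
  -- continuity
  have hcf : Continuous (fun x : ℝ => w⁻¹ * x ^ n - x + (1 - w⁻¹)) := by continuity
  have hcg : Continuous (fun x : ℝ => (1 - l) * x ^ n - x ^ (n-1) + l) := by continuity
  -- bounded above root sets
  have hbddf : BddAbove {x : ℝ | w⁻¹ * x ^ n - x + (1 - w⁻¹) = 0} := by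
    refine ⟨max 1 w + 1, fun x hx => ?_⟩
    by_contra hcon
    push_neg at hcon
    have hx1 : 1 < x := by
      have := le_max_left (1:ℝ) w; linarith
    have hxw : w < x := by
      have := le_max_right (1:ℝ) w; linarith
    have hx2 : x ^ 2 ≤ x ^ n := pow_le_pow_right₀ hx1.le hn
    have h1 : x < x ^ 2 / w := by
      rw [lt_div_iff₀ hw0]; nlinarith
    have h2 : x ^ 2 / w ≤ w⁻¹ * x ^ n := by
      rw [div_eq_inv_mul]
      exact mul_le_mul_of_nonneg_left hx2 (by positivity)
    have h3 : w⁻¹ ≤ 1 := hwinv.le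
    rw [Set.mem_setOf_eq] at hx
    nlinarith
  have hbddg : BddAbove {x : ℝ | (1 - l) * x ^ n - x ^ (n - 1) + l = 0} := by
    refine ⟨max 1 (2/(1-l)) + 1, fun x hx => ?_⟩
    by_contra hcon
    push_neg at hcon
    have hx1 : 1 < x := by
      have := le_max_left (1:ℝ) (2/(1-l)); linarith
    have hxl : 2/(1-l) < x := by
      have := le_max_right (1:ℝ) (2/(1-l)); linarith
    have h2 : 1 < (1-l) * x - 1 := by
      rw [div_lt_iff₀ h1l] at hxl; nlinarith
    have h3 : (1:ℝ) ≤ x ^ (n-1) := one_le_pow₀ hx1.le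
    have hxn : x ^ n = x ^ (n-1) * x := by
      rw [← pow_succ]; congr 1; omega
    rw [Set.mem_setOf_eq, hxn] at hx
    nlinarith
  rcases le_total B C with hBC | hCB
  · -- chain 1 : Glin ≤ B ≤ C ≤ Gsim
    left
    refine ⟨?_, hBC, ?_⟩
    · apply Real.sSup_le _ (by linarith : (0:ℝ) ≤ B)
      intro x hx
      rw [Set.mem_setOf_eq] at hx
      refine root_le_of hdf ?_ ?_ hx
      · rw [hfB]
        rw [hC, le_div_iff₀ h1l] at hBC
        linarith
      · intro y hy
        have hy0 : 0 < B := by linarith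
        have hpow : B ^ (n-1) < y ^ (n-1) :=
          pow_lt_pow_left₀ hy hy0.le (by omega)
        rw [hBpow] at hpow
        have hwn : w ≤ (n:ℝ) * (w * l) := by
          have : (n:ℝ) * (w * l) = w * ((n:ℝ) * l) := by ring
          rw [this]
          nth_rewrite 1 [← mul_one w]
          apply mul_le_mul_of_nonneg_left _ hw0.le
          rw [div_le_iff₀ (by positivity : (0:ℝ) < (n:ℝ))] at hl
          linarith [hl]
        have hkey : w < (n:ℝ) * y ^ (n-1) := by
          calc w ≤ (n:ℝ) * (w * l) := hwn
          _ < (n:ℝ) * y ^ (n-1) := by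
            apply mul_lt_mul_of_pos_left hpow (by positivity)
        have hinv : w⁻¹ * w < w⁻¹ * ((n:ℝ) * y ^ (n-1)) :=
          mul_lt_mul_of_pos_left hkey (by positivity)
        rw [inv_mul_cancel₀ (ne_of_gt hw0)] at hinv
        linarith
    · have hgC0 : (1 - l) * C ^ n - C ^ (n-1) + l ≤ 0 := by
        rw [hgC]
        have hBn : B ^ (n-1) ≤ C ^ (n-1) := pow_le_pow_left₀ (by linarith) hBC _
        rw [hBpow] at hBn
        have hkey : l ≤ C ^ (n-1) * w⁻¹ := by
          have h5 := mul_le_mul_of_nonneg_right hBn (by positivity : (0:ℝ) ≤ w⁻¹)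
          have h6 : (w * l) * w⁻¹ = l := by field_simp
          linarith
        linarith
      obtain ⟨X, hX1, hx1, hxl⟩ : ∃ X, C ≤ X ∧ 1 ≤ X ∧ 2/(1-l) < X :=
        ⟨max C (2/(1-l)) + 1, by linarith [le_max_left C (2/(1-l))],
          by linarith [le_max_left C (2/(1-l))],
          by linarith [le_max_right C (2/(1-l))]⟩
      have hX2 : 0 ≤ (1 - l) * X ^ n - X ^ (n-1) + l := by
        have h2 : 1 ≤ (1-l) * X - 1 := by
          rw [div_lt_iff₀ h1l] at hxl; nlinarith
        have h3 : (1:ℝ) ≤ X ^ (n-1) := one_le_pow₀ hx1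
        have hxn : X ^ n = X ^ (n-1) * X := by
          rw [← pow_succ]; congr 1; omega
        rw [hxn]
        nlinarith
      obtain ⟨c, hc1, hc2⟩ := exists_root_ge' hcg hX1 hgC0 hX2
      exact le_trans hc1 (le_csSup hbddg hc2)
  · -- chain 2 : Gsim ≤ C ≤ B ≤ Glin
    right
    refine ⟨?_, hCB, ?_⟩
    · apply Real.sSup_le _ hC0.le
      intro x hx
      rw [Set.mem_setOf_eq] at hx
      refine root_le_of hdg ?_ ?_ hx
      · rw [hgC]
        have hCn : C ^ (n-1) ≤ B ^ (n-1) := pow_le_pow_left₀ hC0.le hCB _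
        rw [hBpow] at hCn
        have hkey : C ^ (n-1) * w⁻¹ ≤ l := by
          have h5 := mul_le_mul_of_nonneg_right hCn (by positivity : (0:ℝ) ≤ w⁻¹)
          have h6 : (w * l) * w⁻¹ = l := by field_simp
          linarith
        linarith
      · intro y hy
        have hy0 : 0 < y := lt_trans hC0 hy
        have e : y ^ (n-1) = y ^ (n-2) * y := by
          rw [← pow_succ]; congr 1; omega
        have hy2 : 0 < y ^ (n-2) := pow_pos hy0 _
        have hnw : (n:ℝ) * w⁻¹ ≤ 1 := by
          rw [← mul_inv_cancel₀ (ne_of_gt hw0)]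
          exact mul_le_mul_of_nonneg_right hw (by positivity)
        have hkey : (n:ℝ) - 1 < (n:ℝ) * ((1-l) * y) := by
          have h1 : (n:ℝ) * ((1-l) * C) < (n:ℝ) * ((1-l) * y) := by
            apply mul_lt_mul_of_pos_left _ (by positivity)
            exact mul_lt_mul_of_pos_left hy h1l
          rw [hClin] at h1
          nlinarith
        rw [e]
        nlinarith
    · have hfB0 : w⁻¹ * B ^ n - B + (1 - w⁻¹) ≤ 0 := by
        rw [hfB]
        rw [hC, div_le_iff₀ h1l] at hCB
        linarith
      obtain ⟨X, hX1, hx1, hxw⟩ : ∃ X, B ≤ X ∧ 1 ≤ X ∧ w < X :=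
        ⟨max B w + 1, by linarith [le_max_left B w],
          by linarith [le_max_left B w], by linarith [le_max_right B w]⟩
      have hX2 : 0 ≤ w⁻¹ * X ^ n - X + (1 - w⁻¹) := by
        have hx2 : X ^ 2 ≤ X ^ n := pow_le_pow_right₀ hx1 hn
        have h1 : X < X ^ 2 / w := by
          rw [lt_div_iff₀ hw0]; nlinarith
        have h2 : X ^ 2 / w ≤ w⁻¹ * X ^ n := by
          rw [div_eq_inv_mul]
          exact mul_le_mul_of_nonneg_left hx2 (by positivity)
        nlinarith [hwinv]
      obtain ⟨c, hc1, hc2⟩ := exists_root_ge' hcf hX1 hfB0 hX2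
      exact le_trans hc1 (le_csSup hbddf hc2)

lemma floor_fract_toNat_lt (Q : ℕ) (hQ : 1 ≤ Q) (y : ℝ) :
    (⌊(Q:ℝ) * Int.fract y⌋).toNat < Q := by
  have hQ0 : (0:ℝ) < Q := by exact_mod_cast hQ
  have h1 : ⌊(Q:ℝ) * Int.fract y⌋ < (Q:ℤ) := by
    rw [Int.floor_lt]
    push_cast
    nlinarith [Int.fract_lt_one y, Int.fract_nonneg y]
  omega

lemma fract_close {Q : ℕ} (hQ : 1 ≤ Q) {a b : ℝ}
    (h : (⌊(Q:ℝ) * Int.fract a⌋).toNat = (⌊(Q:ℝ) * Int.fract b⌋).toNat) :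
    |Int.fract a - Int.fract b| < 1/Q := by
  have hQ0 : (0:ℝ) < Q := by exact_mod_cast hQ
  have h0a : 0 ≤ ⌊(Q:ℝ) * Int.fract a⌋ :=
    Int.floor_nonneg.mpr (mul_nonneg hQ0.le (Int.fract_nonneg a))
  have h0b : 0 ≤ ⌊(Q:ℝ) * Int.fract b⌋ :=
    Int.floor_nonneg.mpr (mul_nonneg hQ0.le (Int.fract_nonneg b))
  have heq : ⌊(Q:ℝ) * Int.fract a⌋ = ⌊(Q:ℝ) * Int.fract b⌋ := by omega
  have := Int.abs_sub_lt_one_of_floor_eq_floor heq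
  rw [← mul_sub, abs_mul, abs_of_pos hQ0] at this
  rw [lt_div_iff₀ hQ0]
  linarith [this]

lemma dirichlet_sim (n : ℕ) (θ : Fin n → ℝ) (Q : ℕ) (hQ : 1 ≤ Q) :
    ∃ (q : ℤ) (p : Fin n → ℤ), q ≠ 0 ∧ |q| ≤ (Q:ℤ)^n ∧
      ∀ i, |(q:ℝ) * θ i - (p i : ℝ)| < 1/Q := by
  classical
  set f : ℕ → (Fin n → Fin Q) := fun q i =>
    ⟨(⌊(Q:ℝ) * Int.fract ((q:ℝ) * θ i)⌋).toNat, floor_fract_toNat_lt Q hQ _⟩ with hf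
  have hcard : (Finset.univ : Finset (Fin n → Fin Q)).card <
      (Finset.range (Q^n + 1)).card := by
    simp [Finset.card_univ]
  obtain ⟨a, ha, b, hb, hab, hfab⟩ :=
    Finset.exists_ne_map_eq_of_card_lt_of_maps_to hcard
      (fun x _ => Finset.mem_univ (f x))
  rw [Finset.mem_range] at ha hb
  -- wlog b < a
  wlog hba : b < a generalizing a b
  · exact this b hb a ha hab.symm hfab.symm (by omega)
  refine ⟨(a:ℤ) - b, fun i => ⌊(a:ℝ) * θ i⌋ - ⌊(b:ℝ) * θ i⌋, by omega, ?_, ?_⟩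
  · have hcast : ((Q:ℤ))^n = ((Q^n : ℕ) : ℤ) := by push_cast; ring
    rw [hcast, abs_le]
    omega
  · intro i
    have hbox : (⌊(Q:ℝ) * Int.fract ((a:ℝ) * θ i)⌋).toNat
        = (⌊(Q:ℝ) * Int.fract ((b:ℝ) * θ i)⌋).toNat := by
      have := congrFun hfab i
      simpa [hf, Fin.ext_iff] using this
    have hclose := fract_close hQ hbox
    have e : ((a:ℝ) - b) * θ i - ((⌊(a:ℝ) * θ i⌋ : ℝ) - (⌊(b:ℝ) * θ i⌋ : ℝ))
        = Int.fract ((a:ℝ) * θ i) - Int.fract ((b:ℝ) * θ i) := by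
      rw [← Int.self_sub_floor, ← Int.self_sub_floor]
      ring
    simp only []
    push_cast
    rw [e]
    exact hclose

lemma dirichlet_lin (n : ℕ) (hn : 1 ≤ n) (θ : Fin n → ℝ) (Q : ℕ) (hQ : 1 ≤ Q) :
    ∃ x : Fin (n+1) → ℤ, (∃ i : Fin n, x i.succ ≠ 0) ∧
      (∀ i : Fin n, |x i.succ| ≤ (Q:ℤ)) ∧
      |(x 0 : ℝ) + ∑ i : Fin n, θ i * (x i.succ : ℝ)| < 1/(((Q+1)^n - 1 : ℕ) : ℝ) := by
  classical
  set N : ℕ := (Q+1)^n - 1 with hN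
  have hN2 : 2 ≤ (Q+1)^n := by
    calc 2 = 2^1 := rfl
    _ ≤ 2^n := Nat.pow_le_pow_right (by norm_num) hn
    _ ≤ (Q+1)^n := Nat.pow_le_pow_left (by omega) n
  have hN1 : 1 ≤ N := by omega
  set S : (Fin n → Fin (Q+1)) → ℝ := fun v => ∑ i, θ i * ((v i : ℕ) : ℝ) with hS
  set f : (Fin n → Fin (Q+1)) → Fin N := fun v =>
    ⟨(⌊(N:ℝ) * Int.fract (S v)⌋).toNat, floor_fract_toNat_lt N hN1 _⟩ with hf
  have hcard : (Finset.univ : Finset (Fin N)).card <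
      (Finset.univ : Finset (Fin n → Fin (Q+1))).card := by
    simp only [Finset.card_univ, Fintype.card_fin, Fintype.card_fun]
    omega
  obtain ⟨v₁, -, v₂, -, hv, hfv⟩ :=
    Finset.exists_ne_map_eq_of_card_lt_of_maps_to hcard
      (fun x _ => Finset.mem_univ (f x))
  refine ⟨Fin.cons (⌊S v₂⌋ - ⌊S v₁⌋) (fun i => ((v₁ i : ℕ) : ℤ) - ((v₂ i : ℕ) : ℤ)),
    ?_, ?_, ?_⟩
  · obtain ⟨i, hi⟩ := Function.ne_iff.mp hv
    refine ⟨i, ?_⟩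
    rw [Fin.cons_succ]
    have : (v₁ i : ℕ) ≠ (v₂ i : ℕ) := fun h => hi (Fin.ext h)
    omega
  · intro i
    rw [Fin.cons_succ]
    have h1 : (v₁ i : ℕ) < Q + 1 := (v₁ i).isLt
    have h2 : (v₂ i : ℕ) < Q + 1 := (v₂ i).isLt
    rw [abs_le]
    omega
  · have hbox : (⌊(N:ℝ) * Int.fract (S v₁)⌋).toNat
        = (⌊(N:ℝ) * Int.fract (S v₂)⌋).toNat := by
      have := hfv
      simpa [hf, Fin.ext_iff] using this
    have hclose := fract_close hN1 hbox
    have hsum : ∑ i : Fin n, θ i * ((((v₁ i : ℕ) : ℤ) - ((v₂ i : ℕ) : ℤ) : ℤ) : ℝ)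
        = S v₁ - S v₂ := by
      rw [hS]
      simp only []
      rw [← Finset.sum_sub_distrib]
      apply Finset.sum_congr rfl
      intro i _
      push_cast
      ring
    have e : ((⌊S v₂⌋ - ⌊S v₁⌋ : ℤ) : ℝ) + (S v₁ - S v₂)
        = Int.fract (S v₁) - Int.fract (S v₂) := by
      rw [← Int.self_sub_floor, ← Int.self_sub_floor]
      push_cast
      ring
    rw [Fin.cons_zero]
    simp only [Fin.cons_succ]
    rw [hsum, e]
    exact hclose

lemma lam_lower (n : ℕ) (hn : 1 ≤ n) (θ : Fin n → ℝ) {γ : ℝ} (hγ0 : 0 < γ)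
    (hγ : γ < 1/(n:ℝ)) : ∃ T : ℝ, ∀ t : ℝ, T < t → SimSolvable n θ γ t := by
  have hn0 : (0:ℝ) < n := by exact_mod_cast hn
  have hc : 0 < 1 - γ * n := by
    rw [lt_div_iff₀ hn0] at hγ
    linarith
  set c : ℝ := 1 - γ * n with hcdef
  set A : ℝ := (2:ℝ)^n with hA
  have hA1 : (1:ℝ) ≤ A := one_le_pow₀ (by norm_num)
  refine ⟨max 2 (A ^ (1/c)), fun t ht => ?_⟩
  have ht2 : 2 < t := lt_of_le_of_lt (le_max_left _ _) ht
  have htA : A ^ (1/c) < t := lt_of_le_of_lt (le_max_right _ _) ht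
  have ht0 : (0:ℝ) < t := by linarith
  have ht1 : (1:ℝ) < t := by linarith
  set Q : ℕ := ⌈t ^ γ⌉₊ with hQdef
  have htγ0 : (0:ℝ) < t ^ γ := Real.rpow_pos_of_pos ht0 γ
  have hQ1 : 1 ≤ Q := Nat.ceil_pos.mpr htγ0
  have htγ1 : (1:ℝ) ≤ t ^ γ := Real.one_le_rpow ht1.le hγ0.le
  obtain ⟨q, p, hq0, hqle, herr⟩ := dirichlet_sim n θ Q hQ1
  have hQle : (Q:ℝ) ≤ 2 * t ^ γ := by
    have := Nat.ceil_lt_add_one htγ0.le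
    rw [← hQdef] at this
    linarith
  have htc : A ≤ t ^ c := by
    have h1 : (A ^ (1/c)) ^ c ≤ t ^ c :=
      Real.rpow_le_rpow (Real.rpow_nonneg (by positivity) _) htA.le hc.le
    rwa [← Real.rpow_mul (by positivity : (0:ℝ) ≤ A), one_div,
      inv_mul_cancel₀ (ne_of_gt hc), Real.rpow_one] at h1
  have hQn : (Q:ℝ)^n ≤ t := by
    have h1 : (Q:ℝ)^n ≤ (2 * t ^ γ)^n :=
      pow_le_pow_left₀ (by positivity) hQle n
    have h2 : (2 * t ^ γ)^n = A * (t ^ γ)^n := by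
      rw [mul_pow, hA]
    have h3 : (t ^ γ)^n = t ^ (γ * (n:ℝ)) := by
      rw [Real.rpow_mul ht0.le, Real.rpow_natCast]
    have h4 : A * t ^ (γ * (n:ℝ)) ≤ t ^ c * t ^ (γ * (n:ℝ)) :=
      mul_le_mul_of_nonneg_right htc (by positivity)
    have h5 : t ^ c * t ^ (γ * (n:ℝ)) = t := by
      rw [← Real.rpow_add ht0]
      norm_num [hcdef]
    calc (Q:ℝ)^n ≤ (2 * t ^ γ)^n := h1
    _ = A * (t ^ γ)^n := h2
    _ = A * t ^ (γ * (n:ℝ)) := by rw [h3]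
    _ ≤ t ^ c * t ^ (γ * (n:ℝ)) := h4
    _ = t := h5
  refine ⟨Fin.cons q p, by simpa using hq0, ?_, ?_⟩
  · rw [Fin.cons_zero]
    have : ((|q| : ℤ) : ℝ) ≤ (((Q:ℤ)^n : ℤ) : ℝ) := by exact_mod_cast hqle
    push_cast at this
    linarith
  · intro i
    rw [Fin.cons_zero, Fin.cons_succ]
    have h1 := herr i
    have h2 : 1/(Q:ℝ) ≤ t ^ (-γ) := by
      rw [Real.rpow_neg ht0.le, ← one_div]
      apply one_div_le_one_div_of_le htγ0
      exact le_trans (Nat.le_ceil _) (le_refl _)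
    linarith [h1]

lemma om_lower (n : ℕ) (hn : 1 ≤ n) (θ : Fin n → ℝ) {γ : ℝ} (hγ0 : 0 < γ)
    (hγ : γ < (n:ℝ)) : ∃ T : ℝ, ∀ t : ℝ, T < t → LinSolvable n θ γ t := by
  have hn0 : (0:ℝ) < n := by exact_mod_cast hn
  have hγn : γ / n < 1 := by
    rw [div_lt_one hn0]; exact hγ
  have hγn0 : 0 < γ / n := by positivity
  have hc : 0 < 1 - γ / n := by linarith
  set c : ℝ := 1 - γ / n with hcdef
  refine ⟨max 2 ((2:ℝ) ^ (1/c)), fun t ht => ?_⟩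
  have ht2 : 2 < t := lt_of_le_of_lt (le_max_left _ _) ht
  have htA : (2:ℝ) ^ (1/c) < t := lt_of_le_of_lt (le_max_right _ _) ht
  have ht0 : (0:ℝ) < t := by linarith
  have ht1 : (1:ℝ) < t := by linarith
  set Q : ℕ := ⌈t ^ (γ/n)⌉₊ with hQdef
  have htγ0 : (0:ℝ) < t ^ (γ/n) := Real.rpow_pos_of_pos ht0 _
  have hQ1 : 1 ≤ Q := Nat.ceil_pos.mpr htγ0
  obtain ⟨x, hx0, hxle, herr⟩ := dirichlet_lin n hn θ Q hQ1
  have htc : (2:ℝ) ≤ t ^ c := by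
    have h1 : ((2:ℝ) ^ (1/c)) ^ c ≤ t ^ c :=
      Real.rpow_le_rpow (Real.rpow_nonneg (by norm_num) _) htA.le hc.le
    rwa [← Real.rpow_mul (by norm_num : (0:ℝ) ≤ 2), one_div,
      inv_mul_cancel₀ (ne_of_gt hc), Real.rpow_one] at h1
  have hhalf : t ^ (γ/n) ≤ t/2 := by
    have h5 : t ^ (γ/n) * t ^ c = t := by
      rw [← Real.rpow_add ht0]
      norm_num [hcdef]
    have h6 : t ^ (γ/n) * 2 ≤ t ^ (γ/n) * t ^ c :=
      mul_le_mul_of_nonneg_left htc htγ0.le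
    rw [h5] at h6
    linarith
  have hQt : (Q:ℝ) ≤ t := by
    have := Nat.ceil_lt_add_one htγ0.le
    rw [← hQdef] at this
    linarith
  have hNcast : ((((Q+1)^n - 1 : ℕ)) : ℝ) = ((Q:ℝ)+1)^n - 1 := by
    have h1 : 1 ≤ (Q+1)^n := Nat.one_le_pow _ _ (by omega)
    push_cast [Nat.cast_sub h1]
    ring
  have hNge : t ^ γ ≤ ((((Q+1)^n - 1 : ℕ)) : ℝ) := by
    rw [hNcast]
    have h1 : t ^ (γ/n) + 1 ≤ (Q:ℝ) + 1 := by
      linarith [Nat.le_ceil (t ^ (γ/n))]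
    have h2 : (t ^ (γ/n) + 1)^n ≤ ((Q:ℝ)+1)^n :=
      pow_le_pow_left₀ (by positivity) h1 n
    have h3 : (t ^ (γ/n))^n + 1^n ≤ (t ^ (γ/n) + 1)^n :=
      pow_add_pow_le (by positivity) (by norm_num) (by omega)
    have h4 : (t ^ (γ/n))^n = t ^ γ := by
      rw [← Real.rpow_natCast (t ^ (γ/n)) n, ← Real.rpow_mul ht0.le,
        div_mul_cancel₀ _ (ne_of_gt hn0)]
    rw [h4] at h3
    norm_num at h3
    linarith
  refine ⟨x, hx0, fun i => le_trans (by exact_mod_cast hxle i) hQt, ?_⟩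
  have h2 : 1/((((Q+1)^n - 1 : ℕ)) : ℝ) ≤ t ^ (-γ) := by
    rw [Real.rpow_neg ht0.le, ← one_div]
    apply one_div_le_one_div_of_le (Real.rpow_pos_of_pos ht0 γ) hNge
  linarith [herr]

lemma lamhat_ge (n : ℕ) (hn : 1 ≤ n) (θ : Fin n → ℝ)
    (hfin : lambdaHatExp n θ ≠ ⊤) : 1/(n:ℝ) ≤ (lambdaHatExp n θ).toReal := by
  have hn0 : (0:ℝ) < n := by exact_mod_cast hn
  have key : ∀ γ : ℝ, 0 < γ → γ < 1/(n:ℝ) → γ ≤ (lambdaHatExp n θ).toReal := by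
    intro γ h1 h2
    have hmem : ENNReal.ofReal γ ∈ {e : ℝ≥0∞ | ∃ γ : ℝ, 0 < γ ∧ e = ENNReal.ofReal γ ∧
        ∃ T : ℝ, ∀ t : ℝ, T < t → SimSolvable n θ γ t} :=
      ⟨γ, h1, rfl, lam_lower n hn θ h1 h2⟩
    have hle : ENNReal.ofReal γ ≤ lambdaHatExp n θ := le_sSup hmem
    have := ENNReal.toReal_mono hfin hle
    rwa [ENNReal.toReal_ofReal h1.le] at this
  by_contra hcon
  push_neg at hcon
  set r := (lambdaHatExp n θ).toReal with hr
  have hr0 : 0 ≤ r := ENNReal.toReal_nonneg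
  have h1 : 0 < (r + 1/(n:ℝ))/2 := by positivity
  have h2 : (r + 1/(n:ℝ))/2 < 1/(n:ℝ) := by linarith
  have := key _ h1 h2
  linarith

lemma omhat_ge (n : ℕ) (hn : 1 ≤ n) (θ : Fin n → ℝ)
    (hfin : omegaHatExp n θ ≠ ⊤) : (n:ℝ) ≤ (omegaHatExp n θ).toReal := by
  have hn0 : (0:ℝ) < n := by exact_mod_cast hn
  have key : ∀ γ : ℝ, 0 < γ → γ < (n:ℝ) → γ ≤ (omegaHatExp n θ).toReal := by
    intro γ h1 h2
    have hmem : ENNReal.ofReal γ ∈ {e : ℝ≥0∞ | ∃ γ : ℝ, 0 < γ ∧ e = ENNReal.ofReal γ ∧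
        ∃ T : ℝ, ∀ t : ℝ, T < t → LinSolvable n θ γ t} :=
      ⟨γ, h1, rfl, om_lower n hn θ h1 h2⟩
    have hle : ENNReal.ofReal γ ≤ omegaHatExp n θ := le_sSup hmem
    have := ENNReal.toReal_mono hfin hle
    rwa [ENNReal.toReal_ofReal h1.le] at this
  by_contra hcon
  push_neg at hcon
  set r := (omegaHatExp n θ).toReal with hr
  have hr0 : 0 ≤ r := ENNReal.toReal_nonneg
  have h1 : 0 < (r + (n:ℝ))/2 := by positivity
  have h2 : (r + (n:ℝ))/2 < (n:ℝ) := by linarith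
  have := key _ h1 h2
  linarith

end Aux

/-- if `1, θ₁, …, θₙ` are linearly independent over `ℚ`, `ω̂ < ∞` and `λ̂ < 1`,
then either `G_lin(ω̂) ≤ (ω̂λ̂)^{1/(n-1)} ≤ (1-ω̂⁻¹)/(1-λ̂) ≤ G_sim(λ̂)`, or
`G_sim(λ̂) ≤ (1-ω̂⁻¹)/(1-λ̂) ≤ (ω̂λ̂)^{1/(n-1)} ≤ G_lin(ω̂)`. -/
theorem stmt8 (n : ℕ) (hn : 2 ≤ n) (θ : Fin n → ℝ)
    (hindep : LinearIndependent ℚ (Fin.cons 1 θ : Fin (n+1) → ℝ))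
    (homhat : omegaHatExp n θ < ⊤) (hlamhat : lambdaHatExp n θ < 1) :
    (Glin n (omegaHatExp n θ).toReal ≤
        ((omegaHatExp n θ).toReal * (lambdaHatExp n θ).toReal) ^ (((n : ℝ) - 1)⁻¹) ∧
      ((omegaHatExp n θ).toReal * (lambdaHatExp n θ).toReal) ^ (((n : ℝ) - 1)⁻¹) ≤
        (1 - ((omegaHatExp n θ).toReal)⁻¹) / (1 - (lambdaHatExp n θ).toReal) ∧
      (1 - ((omegaHatExp n θ).toReal)⁻¹) / (1 - (lambdaHatExp n θ).toReal) ≤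
        Gsim n (lambdaHatExp n θ).toReal) ∨
    (Gsim n (lambdaHatExp n θ).toReal ≤
        (1 - ((omegaHatExp n θ).toReal)⁻¹) / (1 - (lambdaHatExp n θ).toReal) ∧
      (1 - ((omegaHatExp n θ).toReal)⁻¹) / (1 - (lambdaHatExp n θ).toReal) ≤
        ((omegaHatExp n θ).toReal * (lambdaHatExp n θ).toReal) ^ (((n : ℝ) - 1)⁻¹) ∧
      ((omegaHatExp n θ).toReal * (lambdaHatExp n θ).toReal) ^ (((n : ℝ) - 1)⁻¹) ≤
        Glin n (omegaHatExp n θ).toReal) := by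
  have hn1 : 1 ≤ n := by omega
  have homfin : omegaHatExp n θ ≠ ⊤ := ne_of_lt homhat
  have hlamfin : lambdaHatExp n θ ≠ ⊤ := ne_of_lt (lt_of_lt_of_le hlamhat le_top)
  have hl1 : (lambdaHatExp n θ).toReal < 1 := by
    have := (ENNReal.toReal_lt_toReal hlamfin ENNReal.one_ne_top).mpr hlamhat
    simpa using this
  exact chain_dichotomy n hn _ _ (omhat_ge n hn1 θ homfin) (lamhat_ge n hn1 θ hlamfin) hl1
end

section
/- Suppose 1, θ₁, …, θₙ are linearly independent over ℚ, ω̂ < ∞, and λ̂ < 1. If any two of the four quantities G_lin(ω̂), (ω̂λ̂)^{1/(n−1)}, (1 − ω̂^{−1})/(1 − λ̂), G_sim(λ̂) are equal, then all four of them are equal. -/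
/-!
Write `S(x) = 1 + x + ⋯ + x^{n-1}`. Since `(x - 1) S(x) = xⁿ - 1`, the polynomial defining
`G_lin(w)` is `w⁻¹ (x - 1) (S(x) - w)` and the one defining `G_sim(l)` is
`(x - 1) (x^{n-1} - l S(x))`. As `S` is strictly increasing on `[0, ∞)` and
`x^{n-1} S(1/x) = S(x)`, `G_lin(w)` is the unique `A ≥ 1` with `S(A) = w` and `G_sim(l)` the
unique `D ≥ 1` with `l S(1/D) = 1`; Dirichlet's theorem (`ω̂ ≥ n`, `λ̂ ≥ 1/n`) guarantees that
both exist. Given `S(A) = w`, each of `(wl)^{1/(n-1)}`, `(1 - w⁻¹)/(1 - l)` and `G_sim(l)` equals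
`A` exactly when `A^{n-1} = wl`; and the defining relations of any two of these three quantities
force their common value `x` to satisfy `S(x) = w`, that is `x = A`.
-/

open scoped ENNReal


open Finset

section GeomSum

variable {n : ℕ} {x l : ℝ}

lemma geom_sum_strictMonoOn (hn : 2 ≤ n) :
    StrictMonoOn (fun x : ℝ => ∑ i ∈ range n, x ^ i) (Set.Ici 0) := by
  intro x hx y _ hxy
  refine sum_lt_sum (fun i _ => pow_le_pow_left₀ hx hxy.le i) ⟨1, mem_range.2 hn, ?_⟩
  simpa using hxy

lemma exists_geom_sum_eq (hn : 2 ≤ n) {v : ℝ} (hv : 1 ≤ v) :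
    ∃ x, 0 ≤ x ∧ ∑ i ∈ range n, x ^ i = v := by
  have hle : v ≤ ∑ i ∈ range n, v ^ i :=
    calc v ≤ ∑ i ∈ range 2, v ^ i := by simp [sum_range_succ]
      _ ≤ ∑ i ∈ range n, v ^ i :=
        sum_le_sum_of_subset_of_nonneg (range_subset_range.2 hn)
          fun i _ _ => pow_nonneg (by linarith) i
  obtain ⟨x, hx, hxv⟩ := intermediate_value_Icc (by linarith : (0 : ℝ) ≤ v)
    (continuous_finsetSum _ fun i _ => continuous_pow i).continuousOn
    (⟨by simpa [zero_pow_eq, show 0 < n by omega] using hv, hle⟩ : v ∈ Set.Icc _ _)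
  exact ⟨x, hx.1, hxv⟩

lemma pow_pred_mul_geom_sum_inv (hx : x ≠ 0) :
    x ^ (n - 1) * ∑ i ∈ range n, x⁻¹ ^ i = ∑ i ∈ range n, x ^ i := by
  rw [mul_sum, ← sum_range_reflect]
  refine sum_congr rfl fun i hi => ?_
  have := mem_range.1 hi
  rw [inv_pow, ← pow_sub₀ x hx (by omega)]
  congr 1
  omega

lemma pow_pred_eq_mul_geom_sum_iff (hx : 0 < x) :
    x ^ (n - 1) = l * ∑ i ∈ range n, x ^ i ↔ l * ∑ i ∈ range n, x⁻¹ ^ i = 1 := by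
  rw [← pow_pred_mul_geom_sum_inv hx.ne', mul_left_comm, eq_comm, mul_eq_left₀ (by positivity)]

end GeomSum

section LargestRoots

variable {n : ℕ} {x w l : ℝ}

lemma Glin_poly_eq (hw : w ≠ 0) (x : ℝ) :
    w⁻¹ * x ^ n - x + (1 - w⁻¹) = w⁻¹ * ((x - 1) * (∑ i ∈ range n, x ^ i - w)) := by
  linear_combination (-w⁻¹) * geom_sum_mul x n + (x - 1) * inv_mul_cancel₀ hw

lemma Gsim_poly_eq (hn : n ≠ 0) (x : ℝ) :
    (1 - l) * x ^ n - x ^ (n - 1) + l = (x - 1) * (x ^ (n - 1) - l * ∑ i ∈ range n, x ^ i) := by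
  have hpow : x ^ n = x * x ^ (n - 1) := by rw [← pow_succ']; congr; omega
  linear_combination l * geom_sum_mul x n + hpow

lemma Glin_eq (hn : 2 ≤ n) (hx : 1 ≤ x) (hS : ∑ i ∈ range n, x ^ i = w) : Glin n w = x := by
  have hw : w ≠ 0 := hS ▸ (geom_sum_pos (by linarith) (by omega)).ne'
  refine IsGreatest.csSup_eq ⟨by simp [Glin_poly_eq hw, hS], fun y hy => ?_⟩
  rw [Set.mem_ofPred_eq, Glin_poly_eq hw] at hy
  by_contra! hxy
  have hSy : ∑ i ∈ range n, y ^ i = w := by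
    simpa [hw, sub_eq_zero, (by linarith : y - 1 ≠ 0)] using hy
  exact hxy.ne' <| (geom_sum_strictMonoOn hn).injOn (by simp; linarith)
    (by simp; linarith) (hSy.trans hS.symm)

lemma Gsim_eq (hn : 2 ≤ n) (hx : 1 ≤ x) (h : x ^ (n - 1) = l * ∑ i ∈ range n, x ^ i) :
    Gsim n l = x := by
  refine IsGreatest.csSup_eq ⟨by simp [Gsim_poly_eq (by omega : n ≠ 0), h], fun y hy => ?_⟩
  rw [Set.mem_ofPred_eq, Gsim_poly_eq (by omega)] at hy
  by_contra! hxy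
  have hy' : y ^ (n - 1) = l * ∑ i ∈ range n, y ^ i := by
    simpa [sub_eq_zero, (by linarith : y - 1 ≠ 0)] using hy
  rw [pow_pred_eq_mul_geom_sum_iff (by linarith)] at h hy'
  have hl : l ≠ 0 := by rintro rfl; simp at h
  have hy0 : 0 < y := by linarith
  have := (geom_sum_strictMonoOn hn).injOn (by simp; positivity) (by simp; positivity)
    (mul_left_cancel₀ hl (h.trans hy'.symm))
  exact hxy.ne (inv_inj.1 this)

lemma Glin_spec (hn : 2 ≤ n) (hw : n ≤ w) :
    1 ≤ Glin n w ∧ ∑ i ∈ range n, Glin n w ^ i = w := by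
  have h1n : (1 : ℝ) ≤ n := by exact_mod_cast (by omega : 1 ≤ n)
  obtain ⟨x, hx0, hxw⟩ := exists_geom_sum_eq hn (h1n.trans hw)
  have hx1 : 1 ≤ x :=
    ((geom_sum_strictMonoOn hn).le_iff_le (by simp) hx0).1 (by simpa [hxw] using hw)
  rw [Glin_eq hn hx1 hxw]
  exact ⟨hx1, hxw⟩

lemma Gsim_spec (hn : 2 ≤ n) (hl : (n : ℝ)⁻¹ ≤ l) (hl1 : l < 1) :
    1 ≤ Gsim n l ∧ Gsim n l ^ (n - 1) = l * ∑ i ∈ range n, Gsim n l ^ i := by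
  have hl0 : 0 < l := lt_of_lt_of_le (by positivity) hl
  obtain ⟨y, hy0, hyl⟩ := exists_geom_sum_eq hn (one_le_inv₀ hl0 |>.2 hl1.le)
  have hy1 : y ≤ 1 := by
    refine ((geom_sum_strictMonoOn hn).le_iff_le hy0 (by simp)).1 ?_
    simpa [hyl] using (inv_le_comm₀ (by positivity) hl0).1 hl
  have hy : 0 < y := by
    refine hy0.lt_of_ne fun h => ?_
    subst h
    simp [zero_pow_eq, show 0 < n by omega] at hyl
    linarith
  have hrel : y⁻¹ ^ (n - 1) = l * ∑ i ∈ range n, y⁻¹ ^ i := by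
    rw [pow_pred_eq_mul_geom_sum_iff (inv_pos.2 hy), inv_inv, hyl, mul_inv_cancel₀ hl0.ne']
  have hx1 : 1 ≤ y⁻¹ := (one_le_inv₀ hy).2 hy1
  rw [Gsim_eq hn hx1 hrel]
  exact ⟨hx1, hrel⟩

end LargestRoots

section FourQuantities

variable {n : ℕ} {x w l : ℝ}

lemma rpow_inv_natCast_sub_one_pow (hn : 2 ≤ n) {y : ℝ} (hy : 0 ≤ y) :
    (y ^ ((n : ℝ) - 1)⁻¹) ^ (n - 1) = y := by
  rw [← Nat.cast_pred (by omega)]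
  exact Real.rpow_inv_natCast_pow hy (by omega)

lemma mul_one_sub_mul_eq_iff_of_geom_sum_eq (hn : n ≠ 0) (hx : 0 < x)
    (hS : ∑ i ∈ range n, x ^ i = w) : x * (1 - l) * w = w - 1 ↔ x ^ (n - 1) = w * l := by
  have hpow : x ^ n = x * x ^ (n - 1) := by rw [← pow_succ']; congr; omega
  have hgeom := geom_sum_mul x n
  rw [hS] at hgeom
  constructor
  · intro h
    apply mul_left_cancel₀ hx.ne'
    linear_combination h - hgeom - hpow
  · intro h
    linear_combination x * h + hgeom + hpow

lemma geom_sum_eq_of_pow_pred_eq_of_mul_one_sub (hn : 2 ≤ n) (hw : n ≤ w) (hl : (n : ℝ)⁻¹ ≤ l)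
    (hb : x ^ (n - 1) = w * l) (hc : x * (1 - l) * w = w - 1) :
    ∑ i ∈ range n, x ^ i = w := by
  have hpow : x ^ n = x * x ^ (n - 1) := by rw [← pow_succ']; congr; omega
  have : (x - 1) * (∑ i ∈ range n, x ^ i - w) = 0 := by
    linear_combination geom_sum_mul x n + hpow + x * hb - hc
  rcases mul_eq_zero.1 this with h | h
  · -- `x = 1` forces `wl = 1`, hence `w = n = S(1)`
    obtain rfl : x = 1 := by linarith
    have hn0 : (0 : ℝ) < n := by positivity
    have hl0 : 0 < l := lt_of_lt_of_le (by positivity) hl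
    have hnl : 1 ≤ n * l := by simpa [hn0.ne'] using mul_le_mul_of_nonneg_left hl hn0.le
    simp only [one_pow] at hb
    simp only [one_pow, sum_const, card_range, nsmul_eq_mul, mul_one]
    nlinarith
  · linarith

lemma geom_sum_eq_of_mul_one_sub_of_pow_pred_eq (hn : n ≠ 0) (hc : x * (1 - l) * w = w - 1)
    (hd : x ^ (n - 1) = l * ∑ i ∈ range n, x ^ i) : ∑ i ∈ range n, x ^ i = w := by
  have hpow : x ^ n = x * x ^ (n - 1) := by rw [← pow_succ']; congr; omega
  linear_combination (∑ i ∈ range n, x ^ i) * hc - w * geom_sum_mul x n - w * hpow - w * x * hd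

theorem four_quantities_eq (hn : 2 ≤ n) (hw : n ≤ w) (hl : (n : ℝ)⁻¹ ≤ l) (hl1 : l < 1)
    (a b c d : ℝ) (ha : a = Glin n w) (hb : b = (w * l) ^ ((n : ℝ) - 1)⁻¹)
    (hc : c = (1 - w⁻¹) / (1 - l)) (hd : d = Gsim n l)
    (htwo : a = b ∨ a = c ∨ a = d ∨ b = c ∨ b = d ∨ c = d) :
    a = b ∧ b = c ∧ c = d := by
  have hn0 : n ≠ 0 := by omega
  have hl0 : 0 < l := lt_of_lt_of_le (by positivity) hl
  have hw0 : 0 < w := lt_of_lt_of_le (by positivity) hw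
  obtain ⟨hA1, hSA⟩ := Glin_spec hn hw
  obtain ⟨hd1, hdrel⟩ := hd ▸ Gsim_spec hn hl hl1
  rw [← ha] at hA1 hSA
  have hb0 : 0 ≤ b := hb ▸ Real.rpow_nonneg (by positivity) _
  have hbpow : b ^ (n - 1) = w * l := hb ▸ rpow_inv_natCast_sub_one_pow hn (by positivity)
  have hcrel : c * (1 - l) * w = w - 1 := by
    rw [hc]
    field_simp [(by linarith : 1 - l ≠ 0)]
  have hc_iff := mul_one_sub_mul_eq_iff_of_geom_sum_eq hn0 (by linarith) hSA (l := l)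
  have eq_a {x : ℝ} (hx : 0 ≤ x) (hS : ∑ i ∈ range n, x ^ i = w) : x = a :=
    (geom_sum_strictMonoOn hn).injOn hx (zero_le_one.trans hA1) (hS.trans hSA.symm)
  have hP : a ^ (n - 1) = w * l := by
    rcases htwo with h | h | h | h | h | h
    · rwa [h]
    · exact hc_iff.1 (h ▸ hcrel)
    · rw [h, hdrel, ← h, hSA, mul_comm]
    · rwa [← eq_a hb0 (geom_sum_eq_of_pow_pred_eq_of_mul_one_sub hn hw hl hbpow (h ▸ hcrel))]
    · have hSd : ∑ i ∈ range n, d ^ i = w :=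
        mul_left_cancel₀ hl0.ne' (by rw [← hdrel, ← h, hbpow, mul_comm])
      rwa [← eq_a (by linarith) hSd, ← h]
    · have hSd := geom_sum_eq_of_mul_one_sub_of_pow_pred_eq hn0 (h ▸ hcrel) hdrel
      rw [← eq_a (by linarith) hSd, hdrel, hSd, mul_comm]
  have hba : b = a := (pow_left_inj₀ hb0 (by linarith) (by omega)).1 (hbpow.trans hP.symm)
  have hca : c = a :=
    mul_right_cancel₀ (mul_ne_zero (by linarith) hw0.ne' : (1 - l) * w ≠ 0)
      (by simpa only [mul_assoc] using hcrel.trans (hc_iff.2 hP).symm)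
  have hda : d = a := hd ▸ Gsim_eq hn hA1 (by rw [hSA, hP, mul_comm])
  exact ⟨hba.symm, hba.trans hca.symm, hca.trans hda.symm⟩

end FourQuantities

section Dirichlet

open Filter

variable {n : ℕ}

lemma exists_ne_forall_abs_fract_sub_lt {α ι : Type*} [Fintype ι] {s : Finset α} {N : ℕ}
    (hN : 0 < N) (hs : N ^ Fintype.card ι < #s) (f : α → ι → ℝ) :
    ∃ a ∈ s, ∃ b ∈ s, a ≠ b ∧ ∀ i, |Int.fract (f a i) - Int.fract (f b i)| < 1 / N := by
  classical
  have hN' : (0 : ℝ) < N := by exact_mod_cast hN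
  have hmaps : ∀ a ∈ s, (fun i => ⌊Int.fract (f a i) * N⌋) ∈
      Fintype.piFinset fun _ : ι => Ico (0 : ℤ) N := by
    intro a _
    simp only [Fintype.mem_piFinset, mem_Ico]
    intro i
    refine ⟨Int.floor_nonneg.2 (mul_nonneg (Int.fract_nonneg _) hN'.le), Int.floor_lt.2 ?_⟩
    push_cast
    nlinarith [Int.fract_lt_one (f a i)]
  obtain ⟨a, ha, b, hb, hab, heq⟩ :=
    exists_ne_map_eq_of_card_lt_of_maps_to (by simpa using hs) hmaps
  refine ⟨a, ha, b, hb, hab, fun i => ?_⟩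
  have := Int.abs_sub_lt_one_of_floor_eq_floor (congrFun heq i)
  rw [← sub_mul, abs_mul, abs_of_pos hN'] at this
  rwa [lt_div_iff₀ hN']

lemma exists_abs_mul_sub_lt (θ : Fin n → ℝ) {N : ℕ} (hN : 0 < N) :
    ∃ x : Fin (n + 1) → ℤ, x 0 ≠ 0 ∧ (|x 0| : ℝ) ≤ N ^ n ∧
      ∀ i, |(x 0 : ℝ) * θ i - x i.succ| < 1 / N := by
  obtain ⟨q, hq, r, hr, hqr, h⟩ := exists_ne_forall_abs_fract_sub_lt hN
    (s := range (N ^ n + 1)) (by simp) fun (q : ℕ) i => q * θ i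
  have hq' : (q : ℝ) ≤ N ^ n := by exact_mod_cast Nat.lt_succ_iff.1 (mem_range.1 hq)
  have hr' : (r : ℝ) ≤ N ^ n := by exact_mod_cast Nat.lt_succ_iff.1 (mem_range.1 hr)
  refine ⟨Fin.cons ((q : ℤ) - r) fun i => ⌊q * θ i⌋ - ⌊r * θ i⌋, ?_, ?_, fun i => ?_⟩
  · simpa [sub_eq_zero] using hqr
  · simp only [Fin.cons_zero, Int.cast_sub, Int.cast_natCast]
    exact abs_sub_le_iff.2
      ⟨by linarith [r.cast_nonneg (α := ℝ)], by linarith [q.cast_nonneg (α := ℝ)]⟩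
  · convert h i using 2
    simp only [Fin.cons_zero, Fin.cons_succ, Int.fract]
    push_cast
    ring

lemma exists_abs_add_sum_mul_lt (hn : n ≠ 0) (θ : Fin n → ℝ) {N : ℕ} (hN : 0 < N) :
    ∃ x : Fin (n + 1) → ℤ, (∃ i : Fin n, x i.succ ≠ 0) ∧ (∀ i : Fin n, (|x i.succ| : ℝ) ≤ N) ∧
      |(x 0 : ℝ) + ∑ i : Fin n, θ i * x i.succ| < 1 / N ^ n := by
  obtain ⟨u, hu, v, hv, huv, h⟩ := exists_ne_forall_abs_fract_sub_lt (pow_pos hN n) (ι := Unit)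
    (s := Fintype.piFinset fun _ : Fin n => Icc (0 : ℤ) N)
    (by simpa using Nat.pow_lt_pow_left N.lt_succ_self hn) fun u _ => ∑ i, θ i * u i
  refine ⟨Fin.cons (⌊∑ i, θ i * v i⌋ - ⌊∑ i, θ i * u i⌋) (u - v), ?_, fun i => ?_, ?_⟩
  · obtain ⟨i, hi⟩ := Function.ne_iff.1 huv
    exact ⟨i, by simpa [sub_eq_zero] using hi⟩
  · have hui := mem_Icc.1 (Fintype.mem_piFinset.1 hu i)
    have hvi := mem_Icc.1 (Fintype.mem_piFinset.1 hv i)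
    have : |u i - v i| ≤ N := abs_sub_le_iff.2 ⟨by omega, by omega⟩
    simpa using (by exact_mod_cast this : (|u i - v i| : ℝ) ≤ N)
  · convert h () using 2
    · simp only [Fin.cons_zero, Fin.cons_succ, Pi.sub_apply, Int.fract]
      push_cast
      simp only [mul_sub, sum_sub_distrib]
      ring
    · push_cast
      rfl

lemma eventually_mul_rpow_neg_le (C : ℝ) {γ e : ℝ} (h : γ < e) :
    ∀ᶠ t in atTop, C * t ^ (-e) ≤ t ^ (-γ) := by
  filter_upwards [(tendsto_rpow_atTop (sub_pos.2 h)).eventually_ge_atTop C,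
    eventually_gt_atTop 0] with t hC ht
  calc C * t ^ (-e) ≤ t ^ (e - γ) * t ^ (-e) := by gcongr
    _ = t ^ (-γ) := by rw [← Real.rpow_add ht]; ring_nf

lemma eventually_simSolvable (hn : n ≠ 0) (θ : Fin n → ℝ) {γ : ℝ} (hγ : γ < (n : ℝ)⁻¹) :
    ∀ᶠ t in atTop, SimSolvable n θ γ t := by
  filter_upwards [eventually_mul_rpow_neg_le 2 hγ, eventually_ge_atTop 1] with t ht ht1
  set u := t ^ (n : ℝ)⁻¹
  have hu1 : 1 ≤ u := Real.one_le_rpow ht1 (by positivity)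
  obtain ⟨x, hx0, hxN, hx⟩ := exists_abs_mul_sub_lt θ (Nat.floor_pos.2 hu1)
  refine ⟨x, hx0, hxN.trans ?_, fun i => (hx i).le.trans ?_⟩
  · calc (⌊u⌋₊ : ℝ) ^ n ≤ u ^ n := by gcongr; exact Nat.floor_le (by positivity)
      _ = t := Real.rpow_inv_natCast_pow (by linarith) hn
  · calc 1 / (⌊u⌋₊ : ℝ) ≤ 1 / (u / 2) :=
          one_div_le_one_div_of_le (by positivity) (Nat.div_two_lt_floor hu1).le
      _ = 2 * t ^ (-(n : ℝ)⁻¹) := by rw [Real.rpow_neg (by linarith)]; ring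
      _ ≤ t ^ (-γ) := ht

lemma eventually_linSolvable (hn : n ≠ 0) (θ : Fin n → ℝ) {γ : ℝ} (hγ : γ < n) :
    ∀ᶠ t in atTop, LinSolvable n θ γ t := by
  filter_upwards [eventually_mul_rpow_neg_le (2 ^ n) hγ, eventually_ge_atTop 1] with t ht ht1
  obtain ⟨x, hx0, hxN, hx⟩ := exists_abs_add_sum_mul_lt hn θ (Nat.floor_pos.2 ht1)
  refine ⟨x, hx0, fun i => (hxN i).trans (Nat.floor_le (by linarith)), hx.le.trans ?_⟩
  calc 1 / (⌊t⌋₊ : ℝ) ^ n = (1 / ⌊t⌋₊) ^ n := by rw [one_div_pow]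
    _ ≤ (1 / (t / 2)) ^ n := by
        gcongr
        exact (Nat.div_two_lt_floor ht1).le
    _ = 2 ^ n * t ^ (-(n : ℝ)) := by
        rw [Real.rpow_neg (by linarith), Real.rpow_natCast, one_div_div, div_pow, div_eq_mul_inv]
    _ ≤ t ^ (-γ) := ht

lemma le_toReal_sSup_ofReal {P : ℝ → Prop} {e : ℝ}
    (hfin : sSup {x : ℝ≥0∞ | ∃ γ : ℝ, 0 < γ ∧ x = ENNReal.ofReal γ ∧ P γ} ≠ ⊤)
    (h : ∀ γ, 0 < γ → γ < e → P γ) :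
    e ≤ (sSup {x : ℝ≥0∞ | ∃ γ : ℝ, 0 < γ ∧ x = ENNReal.ofReal γ ∧ P γ}).toReal := by
  refine le_of_forall_lt_imp_le_of_dense fun γ hγ => ?_
  rcases le_or_gt γ 0 with h0 | h0
  · exact h0.trans ENNReal.toReal_nonneg
  · exact (ENNReal.ofReal_le_iff_le_toReal hfin).1 (le_sSup ⟨γ, h0, rfl, h γ h0 hγ⟩)

lemma exists_forall_gt_of_eventually {α : Type*} [SemilatticeSup α] [Nonempty α] {P : α → Prop}
    (h : ∀ᶠ t in atTop, P t) :
    ∃ T, ∀ t, T < t → P t :=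
  let ⟨T, hT⟩ := eventually_atTop.1 h
  ⟨T, fun t ht => hT t ht.le⟩

lemma inv_natCast_le_toReal_lambdaHatExp (hn : n ≠ 0) (θ : Fin n → ℝ)
    (h : lambdaHatExp n θ ≠ ⊤) : (n : ℝ)⁻¹ ≤ (lambdaHatExp n θ).toReal :=
  le_toReal_sSup_ofReal h fun _ _ hγ =>
    exists_forall_gt_of_eventually (eventually_simSolvable hn θ hγ)

lemma natCast_le_toReal_omegaHatExp (hn : n ≠ 0) (θ : Fin n → ℝ)
    (h : omegaHatExp n θ ≠ ⊤) : (n : ℝ) ≤ (omegaHatExp n θ).toReal :=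
  le_toReal_sSup_ofReal h fun _ _ hγ =>
    exists_forall_gt_of_eventually (eventually_linSolvable hn θ hγ)

end Dirichlet

theorem stmt9_general (n : ℕ) (hn : 2 ≤ n) (θ : Fin n → ℝ)
    (homhat : omegaHatExp n θ < ⊤) (hlamhat : lambdaHatExp n θ < 1)
    (a b c d : ℝ)
    (ha : a = Glin n (omegaHatExp n θ).toReal)
    (hb : b = ((omegaHatExp n θ).toReal * (lambdaHatExp n θ).toReal) ^ (((n : ℝ) - 1)⁻¹))
    (hc : c = (1 - ((omegaHatExp n θ).toReal)⁻¹) / (1 - (lambdaHatExp n θ).toReal))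
    (hd : d = Gsim n (lambdaHatExp n θ).toReal)
    (htwo : a = b ∨ a = c ∨ a = d ∨ b = c ∨ b = d ∨ c = d) :
    a = b ∧ b = c ∧ c = d :=
  four_quantities_eq hn (natCast_le_toReal_omegaHatExp (by omega) θ homhat.ne)
    (inv_natCast_le_toReal_lambdaHatExp (by omega) θ (ne_top_of_lt hlamhat))
    (ENNReal.toReal_lt_of_lt_ofReal (by simpa using hlamhat)) a b c d ha hb hc hd htwo

/-- if `1, θ₁, …, θₙ` are linearly independent over `ℚ`, `ω̂ < ∞` and `λ̂ < 1`,
and any two of the four quantities `G_lin(ω̂)`, `(ω̂λ̂)^{1/(n-1)}`, `(1-ω̂⁻¹)/(1-λ̂)`,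
`G_sim(λ̂)` are equal, then all four of them are equal. -/
theorem stmt9 (n : ℕ) (hn : 2 ≤ n) (θ : Fin n → ℝ)
    (hindep : LinearIndependent ℚ (Fin.cons 1 θ : Fin (n+1) → ℝ))
    (homhat : omegaHatExp n θ < ⊤) (hlamhat : lambdaHatExp n θ < 1)
    (a b c d : ℝ)
    (ha : a = Glin n (omegaHatExp n θ).toReal)
    (hb : b = ((omegaHatExp n θ).toReal * (lambdaHatExp n θ).toReal) ^ (((n : ℝ) - 1)⁻¹))
    (hc : c = (1 - ((omegaHatExp n θ).toReal)⁻¹) / (1 - (lambdaHatExp n θ).toReal))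
    (hd : d = Gsim n (lambdaHatExp n θ).toReal)
    (htwo : a = b ∨ a = c ∨ a = d ∨ b = c ∨ b = d ∨ c = d) :
    a = b ∧ b = c ∧ c = d :=
  stmt9_general n hn θ homhat hlamhat a b c d ha hb hc hd htwo
end

section
/- Let α, β, c₁, c₂ be positive real numbers with β ≥ α. Let (t_k)_{k∈ℕ} be an increasing sequence of positive reals with lim_{k→∞} t_k = ∞ and limsup_{k→∞} log(t_{k+1})/log(t_k) = 1, and suppose that for every sufficiently large integer k there exists x ∈ ℤ^{n+1} with r(x) ≤ t_k and c₁ t_k^{−β} ≤ h(x) ≤ c₂ t_k^{−α}. Then for every ε' ∈ (0,1), setting α' = (1−ε')α and β' = (1+ε')β, the following holds: for every sufficiently large real t there exists a nonzero x ∈ ℤ^{n+1} with r(x) < t and t^{−β'} < h(x) < t^{−α'} − t^{−β'}. -/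
open scoped RealInnerProductSpace

/-- The point of `ℝ^{n+1}` with integer coordinates `m`. -/
noncomputable def intPt (n : ℕ) (m : Fin (n+1) → ℤ) : EuclideanSpace ℝ (Fin (n+1)) :=
  (EuclideanSpace.equiv (Fin (n+1)) ℝ).symm (fun i => (m i : ℝ))

lemma hdist_intPt_zero (n : ℕ) (θ : Fin n → ℝ) : hdist n θ (intPt n 0) = 0 := by
  have h0 : intPt n 0 = 0 := by
    ext i; simp [intPt]
  rw [h0, hdist]
  exact Metric.infDist_zero_of_mem (Submodule.zero_mem _)

/-- under Nesterenko'\''s Diophantine hypotheses, for every `ε' ∈ (0,1)`, setting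
`α' = (1-ε')α` and `β' = (1+ε')β`, for every sufficiently large real `t` there is a nonzero
integer point `x` with `r(x) < t` and `t^{-β'} < h(x) < t^{-α'} - t^{-β'}`. -/
theorem stmt16 (n : ℕ) (hn : 2 ≤ n) (θ : Fin n → ℝ)
    (α β c₁ c₂ : ℝ) (hα : 0 < α) (hβ : 0 < β) (hc₁ : 0 < c₁) (hc₂ : 0 < c₂)
    (hαβ : α ≤ β)
    (t : ℕ → ℝ) (htpos : ∀ k, 0 < t k) (htmono : StrictMono t)
    (htlim : Filter.Tendsto t Filter.atTop Filter.atTop)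
    (htlog : Filter.limsup (fun k => Real.log (t (k+1)) / Real.log (t k)) Filter.atTop = 1)
    (happrox : ∀ᶠ k in Filter.atTop, ∃ m : Fin (n+1) → ℤ,
      rdist n θ (intPt n m) ≤ t k ∧
      c₁ * t k ^ (-β) ≤ hdist n θ (intPt n m) ∧ hdist n θ (intPt n m) ≤ c₂ * t k ^ (-α)) :
    ∀ ε' : ℝ, 0 < ε' → ε' < 1 →
      ∃ T : ℝ, ∀ s : ℝ, T ≤ s →
        ∃ m : Fin (n+1) → ℤ, m ≠ 0 ∧ rdist n θ (intPt n m) < s ∧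
          s ^ (-((1 + ε') * β)) < hdist n θ (intPt n m) ∧
          hdist n θ (intPt n m) < s ^ (-((1 - ε') * α)) - s ^ (-((1 + ε') * β)) := by
  intro ε' hε0 hε1
  set γ : ℝ := 1 - ε' / 2 with hγdef
  have hγ0 : 0 < γ := by simp only [hγdef]; linarith
  have hγ1 : γ < 1 := by simp only [hγdef]; linarith
  have h1γ : (1 : ℝ) < 1 / γ := by
    rw [lt_div_iff₀ hγ0]; linarith
  -- boundedness of the log ratio
  have hbdd : Filter.IsBoundedUnder (· ≤ ·) Filter.atTop
      (fun k => Real.log (t (k+1)) / Real.log (t k)) := by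
    by_contra hb
    have hempty : {a : ℝ | ∀ᶠ k in Filter.atTop,
        Real.log (t (k+1)) / Real.log (t k) ≤ a} = ∅ := by
      by_contra hne
      obtain ⟨a, ha⟩ := Set.nonempty_iff_ne_empty.2 hne
      exact hb ⟨a, Filter.eventually_map.2 ha⟩
    have := htlog
    rw [Filter.limsup_eq, hempty, Real.sInf_empty] at this
    norm_num at this
  have hratio : ∀ᶠ k in Filter.atTop,
      Real.log (t (k+1)) / Real.log (t k) < 1 / γ :=
    Filter.eventually_lt_of_limsup_lt (htlog ▸ h1γ) hbdd
  have ht1 : ∀ᶠ k in Filter.atTop, (1 : ℝ) < t k := htlim.eventually_gt_atTop 1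
  -- combine eventual facts on k
  obtain ⟨N, hN⟩ := Filter.eventually_atTop.1 (happrox.and (hratio.and ht1))
  -- eventual facts on s
  have hEs : ∀ᶠ s : ℝ in Filter.atTop,
      t N < s ∧ 1 < s ∧ c₁⁻¹ < s ^ (ε' * β) ∧
      c₂ * s ^ (-(ε' * α / 2)) ≤ 1 / 2 ∧
      s ^ ((1 - ε') * α - (1 + ε') * β) ≤ 1 / 2 := by
    have e1 : ∀ᶠ s : ℝ in Filter.atTop, t N < s := Filter.eventually_gt_atTop _
    have e2 : ∀ᶠ s : ℝ in Filter.atTop, (1 : ℝ) < s := Filter.eventually_gt_atTop _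
    have e3 : ∀ᶠ s : ℝ in Filter.atTop, c₁⁻¹ < s ^ (ε' * β) :=
      (tendsto_rpow_atTop (by positivity)).eventually_gt_atTop _
    have e4 : ∀ᶠ s : ℝ in Filter.atTop, c₂ * s ^ (-(ε' * α / 2)) ≤ 1 / 2 := by
      have := (tendsto_rpow_neg_atTop (y := ε' * α / 2) (by positivity)).const_mul c₂
      rw [mul_zero] at this
      exact this.eventually (ge_mem_nhds (by norm_num))
    have e5 : ∀ᶠ s : ℝ in Filter.atTop, s ^ ((1 - ε') * α - (1 + ε') * β) ≤ 1 / 2 := by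
      have hexp : (1 - ε') * α - (1 + ε') * β = -((1 + ε') * β - (1 - ε') * α) := by ring
      rw [hexp]
      have hpos : 0 < (1 + ε') * β - (1 - ε') * α := by nlinarith
      exact (tendsto_rpow_neg_atTop hpos).eventually (ge_mem_nhds (by norm_num))
    filter_upwards [e1, e2, e3, e4, e5] with s h1 h2 h3 h4 h5
    exact ⟨h1, h2, h3, h4, h5⟩
  obtain ⟨T, hT⟩ := Filter.eventually_atTop.1 hEs
  refine ⟨T, fun s hs => ?_⟩
  obtain ⟨hsN, hs1, hs3, hs4, hs5⟩ := hT s hs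
  have hs0 : (0 : ℝ) < s := lt_trans one_pos hs1
  -- find k with t k < s ≤ t (k+1)
  have hex : ∃ j, s ≤ t j := (htlim.eventually_ge_atTop s).exists
  set k₀ := Nat.find hex with hk₀def
  have hk₀ : s ≤ t k₀ := Nat.find_spec hex
  have hk₀pos : N < k₀ := by
    by_contra h
    push_neg at h
    have : s ≤ t N := le_trans hk₀ (htmono.monotone h)
    linarith
  set k := k₀ - 1 with hkdef
  have hkk : k + 1 = k₀ := by omega
  have hkN : N ≤ k := by omega
  have htks : t k < s := by
    have := Nat.find_min hex (m := k) (by omega)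
    push_neg at this
    exact this
  have hsk1 : s ≤ t (k + 1) := hkk ▸ hk₀
  obtain ⟨⟨m, hmr, hml, hmu⟩, hrk, htk1⟩ := hN k hkN
  have htk0 : 0 < t k := htpos k
  have hlogtk : 0 < Real.log (t k) := Real.log_pos htk1
  -- s ^ γ < t k
  have hsγ : s ^ γ < t k := by
    have h1 : Real.log (t (k+1)) < (1 / γ) * Real.log (t k) := by
      rw [div_lt_iff₀ hlogtk] at hrk
      linarith [hrk]
    have h2 : Real.log s ≤ Real.log (t (k+1)) :=
      Real.log_le_log hs0 hsk1
    have h3 : γ * Real.log s < Real.log (t k) := by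
      have := mul_lt_mul_of_pos_left h1 hγ0
      rw [← mul_assoc, mul_one_div, div_self (ne_of_gt hγ0), one_mul] at this
      nlinarith
    have h4 : Real.log (s ^ γ) < Real.log (t k) := by
      rwa [Real.log_rpow hs0]
    exact (Real.log_lt_log_iff (Real.rpow_pos_of_pos hs0 γ) htk0).1 h4
  -- lower bound: s^(-(1+ε')β) < hdist
  have hlow : s ^ (-((1 + ε') * β)) < hdist n θ (intPt n m) := by
    have h1 : s ^ (-β) < t k ^ (-β) :=
      Real.rpow_lt_rpow_of_neg htk0 htks (by linarith)
    have h2 : s ^ (-((1 + ε') * β)) = s ^ (-(ε' * β)) * s ^ (-β) := by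
      rw [← Real.rpow_add hs0]; ring_nf
    have h3 : s ^ (-(ε' * β)) < c₁ := by
      rw [Real.rpow_neg hs0.le]
      rw [inv_lt_comm₀ (Real.rpow_pos_of_pos hs0 _) hc₁] at *
      · exact hs3
    calc s ^ (-((1 + ε') * β)) = s ^ (-(ε' * β)) * s ^ (-β) := h2
      _ < c₁ * s ^ (-β) := by
          exact mul_lt_mul_of_pos_right h3 (Real.rpow_pos_of_pos hs0 _)
      _ < c₁ * t k ^ (-β) := by
          exact mul_lt_mul_of_pos_left h1 hc₁
      _ ≤ hdist n θ (intPt n m) := hml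
  -- m ≠ 0
  have hm0 : m ≠ 0 := by
    intro h
    rw [h, hdist_intPt_zero] at hml
    have : 0 < c₁ * t k ^ (-β) := by positivity
    linarith
  -- upper bound
  have hup : hdist n θ (intPt n m) < s ^ (-((1 - ε') * α)) - s ^ (-((1 + ε') * β)) := by
    have h1 : t k ^ (-α) < (s ^ γ) ^ (-α) :=
      Real.rpow_lt_rpow_of_neg (Real.rpow_pos_of_pos hs0 γ) hsγ (by linarith)
    have h2 : (s ^ γ) ^ (-α) = s ^ (-(γ * α)) := by
      rw [← Real.rpow_mul hs0.le]
      ring_nf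
    have h3 : hdist n θ (intPt n m) < c₂ * s ^ (-(γ * α)) := by
      calc hdist n θ (intPt n m) ≤ c₂ * t k ^ (-α) := hmu
        _ < c₂ * s ^ (-(γ * α)) := by
            rw [← h2]; exact mul_lt_mul_of_pos_left h1 hc₂
    have key : c₂ * s ^ (-(γ * α)) + s ^ (-((1 + ε') * β)) ≤ s ^ (-((1 - ε') * α)) := by
      have e1 : s ^ (-(γ * α)) = s ^ (-(ε' * α / 2)) * s ^ (-((1 - ε') * α)) := by
        rw [← Real.rpow_add hs0]
        congr 1
        simp only [hγdef]; ring
      have e2 : s ^ (-((1 + ε') * β))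
          = s ^ ((1 - ε') * α - (1 + ε') * β) * s ^ (-((1 - ε') * α)) := by
        rw [← Real.rpow_add hs0]
        congr 1; ring
      have hpos : (0:ℝ) < s ^ (-((1 - ε') * α)) := Real.rpow_pos_of_pos hs0 _
      rw [e1, e2, ← mul_assoc, ← add_mul]
      have hsum : c₂ * s ^ (-(ε' * α / 2)) + s ^ ((1 - ε') * α - (1 + ε') * β) ≤ 1 := by
        linarith
      calc (c₂ * s ^ (-(ε' * α / 2)) + s ^ ((1 - ε') * α - (1 + ε') * β)) * s ^ (-((1 - ε') * α))
          ≤ 1 * s ^ (-((1 - ε') * α)) := mul_le_mul_of_nonneg_right hsum hpos.le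
        _ = s ^ (-((1 - ε') * α)) := one_mul _
    linarith
  exact ⟨m, hm0, lt_of_le_of_lt hmr htks, hlow, hup⟩
end

section
/- Let α', β' be positive real numbers with β' ≥ α', and set δ' = (1+β')/α'. Suppose that for every sufficiently large real t there exists a nonzero x ∈ ℤ^{n+1} with r(x) < t and t^{−β'} < h(x) < t^{−α'} − t^{−β'}. Then every primitive integer point v ∈ ℤ^{n+1} (i.e., with coprime coordinates) with h(v) sufficiently large satisfies r(v) ≥ h(v)^{1−δ'}. -/
open scoped RealInnerProductSpace

/-!
Let `u` be the unit vector spanning `ℓ`, so that `h(x) = |⟪u, x⟫|` and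
`r(x) = ‖x - ⟪u, x⟫ u‖`. For integer points `x`, `v` the integer `⟪x, v⟫` splits as
`⟪u, x⟫⟪u, v⟫ + ⟪x - ⟪u, x⟫ u, v - ⟪u, v⟫ u⟫`, whose second term is at most `r(x) r(v)` in
absolute value. Given `v` with `H = h(v)` large and `r(v) < H^{1-δ'}`, apply the hypothesis at
`t = H^{1/α'}`: then `r(x) r(v) < H t^{-β'}` and `t^{-β'} < h(x) < H⁻¹ - t^{-β'}`, which forces
`|⟪x, v⟫| < 1`, so `⟪x, v⟫ = 0`, and then
`h(x) H = |⟪x - ⟪u, x⟫ u, v - ⟪u, v⟫ u⟫| < H t^{-β'} < h(x) H`.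
-/

open Metric Filter

theorem Submodule.infDist_eq_norm_sub_starProjection_s17 {E : Type*} [NormedAddCommGroup E]
    [InnerProductSpace ℝ E] (K : Submodule ℝ E) [K.HasOrthogonalProjection] (x : E) :
    infDist x (K : Set E) = ‖x - K.starProjection x‖ := by
  rw [infDist_eq_iInf, Submodule.starProjection_minimal]
  simp_rw [dist_eq_norm]
  rfl

theorem intCast_ne_mul_add_of_abs_lt {k : ℤ} {a b c ε : ℝ} (hc : |c| < |b| * ε)
    (hlo : ε < |a|) (hhi : |a| < |b|⁻¹ - ε) : (k : ℝ) ≠ a * b + c := by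
  intro hk
  have hb : 0 < |b| := by
    by_contra! hb
    nlinarith [abs_nonneg b, abs_nonneg c, abs_nonneg a]
  have hab : |a * b| < 1 - |b| * ε := by
    rw [abs_mul]
    calc |a| * |b| < (|b|⁻¹ - ε) * |b| := mul_lt_mul_of_pos_right hhi hb
      _ = 1 - |b| * ε := by field_simp
  have hk0 : k = 0 := by
    have : |(k : ℝ)| < 1 := by
      rw [hk]
      linarith [abs_add_le (a * b) c]
    rw [← Int.cast_abs, ← Int.cast_one, Int.cast_lt, Int.abs_lt_one_iff] at this
    exact this
  have hc' : |a * b| = |c| := by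
    rw [hk0, Int.cast_zero, eq_comm, ← neg_eq_iff_add_eq_zero] at hk
    rw [← hk, abs_neg]
  rw [abs_mul] at hc'
  nlinarith

section UnitVector

variable {E : Type*} [NormedAddCommGroup E] [InnerProductSpace ℝ E] {u : E}

theorem infDist_span_singleton_of_norm_eq_one (hu : ‖u‖ = 1) (x : E) :
    infDist x ((ℝ ∙ u : Submodule ℝ E) : Set E) = ‖x - ⟪u, x⟫ • u‖ := by
  rw [Submodule.infDist_eq_norm_sub_starProjection_s17, Submodule.starProjection_unit_singleton ℝ hu]

theorem infDist_orthogonal_span_singleton_of_norm_eq_one (hu : ‖u‖ = 1) (x : E) :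
    infDist x ((ℝ ∙ u)ᗮ : Set E) = |⟪u, x⟫| := by
  rw [Submodule.infDist_eq_norm_sub_starProjection_s17, Submodule.starProjection_orthogonal_val,
    sub_sub_cancel, Submodule.starProjection_unit_singleton ℝ hu, norm_smul, hu, mul_one,
    Real.norm_eq_abs]

theorem real_inner_eq_mul_add_inner_sub_smul (hu : ‖u‖ = 1) (x y : E) :
    ⟪x, y⟫ = ⟪u, x⟫ * ⟪u, y⟫ + ⟪x - ⟪u, x⟫ • u, y - ⟪u, y⟫ • u⟫ := by
  have huu : ⟪u, u⟫ = 1 := by rw [real_inner_self_eq_norm_sq, hu, one_pow]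
  simp only [inner_sub_left, inner_sub_right, real_inner_smul_left, real_inner_smul_right, huu,
    real_inner_comm x u]
  ring

theorem inner_ne_intCast_of_infDist_lt (hu : ‖u‖ = 1) {x y : E} {ε : ℝ} (k : ℤ)
    (hr : infDist x ((ℝ ∙ u : Submodule ℝ E) : Set E) *
      infDist y ((ℝ ∙ u : Submodule ℝ E) : Set E) < infDist y ((ℝ ∙ u)ᗮ : Set E) * ε)
    (hlo : ε < infDist x ((ℝ ∙ u)ᗮ : Set E))
    (hhi : infDist x ((ℝ ∙ u)ᗮ : Set E) < (infDist y ((ℝ ∙ u)ᗮ : Set E))⁻¹ - ε) :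
    ⟪x, y⟫ ≠ k := by
  simp only [infDist_span_singleton_of_norm_eq_one hu,
    infDist_orthogonal_span_singleton_of_norm_eq_one hu] at hr hlo hhi
  rw [real_inner_eq_mul_add_inner_sub_smul hu]
  exact (intCast_ne_mul_add_of_abs_lt ((abs_real_inner_le_norm _ _).trans_lt hr) hlo hhi).symm

end UnitVector

theorem thetaVec_ne_zero (n : ℕ) (θ : Fin n → ℝ) : thetaVec n θ ≠ 0 := by
  intro h
  have h0 : thetaVec n θ 0 = 1 := rfl
  simp [h] at h0

theorem exists_norm_eq_one_lineTheta_eq_span (n : ℕ) (θ : Fin n → ℝ) :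
    ∃ u, ‖u‖ = 1 ∧ lineTheta n θ = ℝ ∙ u :=
  ⟨‖thetaVec n θ‖⁻¹ • thetaVec n θ, norm_smul_inv_norm (thetaVec_ne_zero n θ),
    (Submodule.span_singleton_smul_eq
      (inv_ne_zero (norm_ne_zero_iff.2 (thetaVec_ne_zero n θ))).isUnit _).symm⟩

theorem inner_intPt (n : ℕ) (m v : Fin (n+1) → ℤ) :
    ⟪intPt n m, intPt n v⟫ = ((∑ i, m i * v i : ℤ) : ℝ) := by
  simp [intPt, PiLp.inner_apply, EuclideanSpace.equiv, RCLike.inner_apply, mul_comm]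

theorem stmt17_general (n : ℕ) (θ : Fin n → ℝ)
    (α' β' : ℝ) (hα' : 0 < α')
    (happrox : ∃ T : ℝ, ∀ s : ℝ, T ≤ s →
      ∃ m : Fin (n+1) → ℤ, m ≠ 0 ∧ rdist n θ (intPt n m) < s ∧
        s ^ (-β') < hdist n θ (intPt n m) ∧
        hdist n θ (intPt n m) < s ^ (-α') - s ^ (-β')) :
    ∃ H₀ : ℝ, ∀ v : Fin (n+1) → ℤ, Finset.univ.gcd v = 1 →
      H₀ ≤ hdist n θ (intPt n v) →
      rdist n θ (intPt n v) ≥ hdist n θ (intPt n v) ^ (1 - (1 + β') / α') := by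
  obtain ⟨T, hT⟩ := happrox
  obtain ⟨u, hu, hline⟩ := exists_norm_eq_one_lineTheta_eq_span n θ
  simp only [rdist, hdist, hline] at hT ⊢
  obtain ⟨H₀, hH₀⟩ := eventually_atTop.1 <| (eventually_gt_atTop 0).and
    ((tendsto_rpow_atTop (inv_pos.2 hα')).eventually_ge_atTop T)
  refine ⟨H₀, fun v _ hv ↦ ?_⟩
  set H := infDist (intPt n v) ((ℝ ∙ u)ᗮ : Set _)
  set s := H ^ α'⁻¹
  obtain ⟨hH, hsT⟩ := hH₀ H hv
  obtain ⟨m, -, hrm, hlo, hhi⟩ := hT s hsT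
  by_contra! hrv
  have hsα : s ^ (-α') = H⁻¹ := by
    rw [← Real.rpow_mul hH.le, inv_mul_eq_div, neg_div, div_self hα'.ne', Real.rpow_neg_one]
  have hsβ : s * H ^ (1 - (1 + β') / α') = H * s ^ (-β') := by
    calc s * H ^ (1 - (1 + β') / α') = H ^ (α'⁻¹ + (1 - (1 + β') / α')) :=
          (Real.rpow_add hH _ _).symm
      _ = H ^ (1 + α'⁻¹ * -β') := by congr 1; field_simp; ring
      _ = H * s ^ (-β') := by rw [Real.rpow_add hH, Real.rpow_one, Real.rpow_mul hH.le]
  refine inner_ne_intCast_of_infDist_lt hu _ ?_ hlo (hsα ▸ hhi) (inner_intPt n m v)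
  calc _ < s * H ^ (1 - (1 + β') / α') := mul_lt_mul'' hrm hrv infDist_nonneg infDist_nonneg
    _ = H * s ^ (-β') := hsβ

/-- let `0 < α' ≤ β'` and `δ' = (1+β')/α'`.  If for every sufficiently large
real `t` there is a nonzero integer point `x` with `r(x) < t` and
`t^{-β'} < h(x) < t^{-α'} - t^{-β'}`, then every primitive integer point `v` with `h(v)`
sufficiently large satisfies `r(v) ≥ h(v)^{1-δ'}`. -/
theorem stmt17 (n : ℕ) (hn : 2 ≤ n) (θ : Fin n → ℝ)
    (α' β' : ℝ) (hα' : 0 < α') (hαβ' : α' ≤ β')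
    (happrox : ∃ T : ℝ, ∀ s : ℝ, T ≤ s →
      ∃ m : Fin (n+1) → ℤ, m ≠ 0 ∧ rdist n θ (intPt n m) < s ∧
        s ^ (-β') < hdist n θ (intPt n m) ∧
        hdist n θ (intPt n m) < s ^ (-α') - s ^ (-β')) :
    ∃ H₀ : ℝ, ∀ v : Fin (n+1) → ℤ, Finset.univ.gcd v = 1 →
      H₀ ≤ hdist n θ (intPt n v) →
      rdist n θ (intPt n v) ≥ hdist n θ (intPt n v) ^ (1 - (1 + β') / α') :=
  stmt17_general n θ α' β' hα' happrox
end
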